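/- arXiv:1705.00447 — 4 statements merged into one kernel-verified Lean document; each statement's English description precedes it below -/
import Mathlib

section
/- Let (A, 𝔪) be a Noetherian regular local ring, v a real-valued valuation of Frac(A) centered on A, and x_1, …, x_d a regular system of parameters of A such that the real numbers v(x_1), …, v(x_d) are linearly independent over ℤ (so distinct monomials in the x_i have distinct values). Then for every real m > 0, the valuation ideal 𝔞_m = {a ∈ A : v(a) ≥ m} ∪ {0} is generated by the monomials {x_1^{a_1}⋯x_d^{a_d} : a_i ∈ ℤ≥0, a_1·v(x_1) + ⋯ + a_d·v(x_d) ≥ m}. (Monomiality of valuation ideals, final assertion of Proposition 2.5.) -/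
open scoped TensorProduct

noncomputable section

namespace Paper

/-- Transcendence degree of an `R`-algebra `A`, as a cardinal: the supremum of cardinalities
of algebraically independent subsets of `A`. -/
noncomputable def trdeg (R A : Type*) [CommRing R] [CommRing A] [Algebra R A] : Cardinal :=
  ⨆ s : {s : Set A // AlgebraicIndependent R ((↑) : s → A)}, Cardinal.mk s.1

/-- A valuation of `K/k` with values in a totally ordered abelian group `Γ`:
`v` is only meaningful on nonzero elements of `K`. -/
structure ValG (k K Γ : Type*) [Field k] [Field K] [Algebra k K]
    [AddCommGroup Γ] [LinearOrder Γ] [IsOrderedAddMonoid Γ] where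
  v : K → Γ
  v_mul : ∀ x y : K, x ≠ 0 → y ≠ 0 → v (x * y) = v x + v y
  v_add : ∀ x y : K, x ≠ 0 → y ≠ 0 → x + y ≠ 0 → min (v x) (v y) ≤ v (x + y)
  v_const : ∀ c : k, c ≠ 0 → v (algebraMap k K c) = 0

/-- A real-valued valuation of `K/k`. -/
abbrev RealVal (k K : Type*) [Field k] [Field K] [Algebra k K] := ValG k K ℝ

namespace ValG

universe uk uK uG

variable {k : Type uk} {K : Type uK} {Γ : Type uG}
variable [Field k] [Field K] [Algebra k K] [AddCommGroup Γ] [LinearOrder Γ] [IsOrderedAddMonoid Γ]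
variable (w : ValG k K Γ)

/-- The valuation is nontrivial: its value group is not `0`. -/
def Nontriv : Prop := ∃ x : K, x ≠ 0 ∧ w.v x ≠ 0

/-- The value group of `w`, as a subgroup of `Γ` (the set of values on `K^×`,
which is a subgroup). -/
def valueGroup : AddSubgroup Γ := AddSubgroup.closure {g : Γ | ∃ x : K, x ≠ 0 ∧ w.v x = g}

/-- The rational rank of `w` : `dim_ℚ (ℚ ⊗_ℤ Γ_v)`. -/
noncomputable def ratRank : Cardinal := Module.rank ℚ (ℚ ⊗[ℤ] ↥w.valueGroup)

lemma v_one : w.v 1 = 0 := by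
  have h := w.v_mul 1 1 one_ne_zero one_ne_zero
  rw [one_mul] at h
  exact left_eq_add.mp h

/-- The valuation ring `R_v` of `w`, as a `k`-subalgebra of `K`. -/
def valuationSubring : Subalgebra k K where
  carrier := {x : K | x = 0 ∨ 0 ≤ w.v x}
  mul_mem' := by
    intro a b ha hb
    by_cases hab : a * b = 0
    · exact Or.inl hab
    · have ha0 : a ≠ 0 := left_ne_zero_of_mul hab
      have hb0 : b ≠ 0 := right_ne_zero_of_mul hab
      rcases ha with rfl | ha
      · exact absurd rfl ha0
      rcases hb with rfl | hb
      · exact absurd rfl hb0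
      exact Or.inr (by rw [w.v_mul a b ha0 hb0]; exact add_nonneg ha hb)
  one_mem' := Or.inr (le_of_eq w.v_one.symm)
  add_mem' := by
    intro a b ha hb
    by_cases hab : a + b = 0
    · exact Or.inl hab
    by_cases ha0 : a = 0
    · subst ha0; rw [zero_add] at hab ⊢; exact hb
    by_cases hb0 : b = 0
    · subst hb0; rw [add_zero] at hab ⊢; exact ha
    rcases ha with rfl | ha
    · exact absurd rfl ha0
    rcases hb with rfl | hb
    · exact absurd rfl hb0
    exact Or.inr (le_trans (le_min ha hb) (w.v_add a b ha0 hb0 hab))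
  zero_mem' := Or.inl rfl
  algebraMap_mem' := by
    intro r
    by_cases hr : r = 0
    · subst hr; exact Or.inl (map_zero _)
    · exact Or.inr (le_of_eq (w.v_const r hr).symm)

/-- The maximal ideal `𝔪_v` of the valuation ring. -/
def mIdeal : Ideal w.valuationSubring where
  carrier := {x : w.valuationSubring | (x : K) = 0 ∨ 0 < w.v (x : K)}
  zero_mem' := Or.inl rfl
  add_mem' := by
    rintro a b ha hb
    show ((a : K) + (b : K) = 0) ∨ 0 < w.v ((a : K) + (b : K))
    by_cases hab : (a : K) + (b : K) = 0
    · exact Or.inl hab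
    by_cases ha0 : (a : K) = 0
    · rw [ha0, zero_add] at hab ⊢; exact hb
    by_cases hb0 : (b : K) = 0
    · rw [hb0, add_zero] at hab ⊢; exact ha
    rcases ha with h | ha
    · exact absurd h ha0
    rcases hb with h | hb
    · exact absurd h hb0
    exact Or.inr (lt_of_lt_of_le (lt_min ha hb) (w.v_add _ _ ha0 hb0 hab))
  smul_mem' := by
    rintro c x hx
    show ((c : K) * (x : K) = 0) ∨ 0 < w.v ((c : K) * (x : K))
    by_cases hcx : (c : K) * (x : K) = 0
    · exact Or.inl hcx
    have hc0 : (c : K) ≠ 0 := left_ne_zero_of_mul hcx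
    have hx0 : (x : K) ≠ 0 := right_ne_zero_of_mul hcx
    rcases hx with h | hx
    · exact absurd h hx0
    rcases c.2 with h | hc
    · exact absurd h hc0
    refine Or.inr ?_
    rw [w.v_mul _ _ hc0 hx0]
    exact add_pos_of_nonneg_of_pos hc hx

/-- The residue field `κ_v` of `w` (as a ring). -/
def residue : Type _ := w.valuationSubring ⧸ w.mIdeal

noncomputable instance : CommRing w.residue :=
  inferInstanceAs (CommRing (w.valuationSubring ⧸ w.mIdeal))

noncomputable instance : Algebra k w.residue :=
  inferInstanceAs (Algebra k (w.valuationSubring ⧸ w.mIdeal))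

/-- The transcendence degree of the residue field of `w` over `k`. -/
noncomputable def resTrdeg : Cardinal := trdeg k w.residue

/-- `w` is an Abhyankar valuation: `rat.rk (v) + trdeg (κ_v / k) = trdeg (K/k)`. -/
def IsAbhyankar : Prop :=
  Cardinal.lift.{uK} w.ratRank + Cardinal.lift.{uG} w.resTrdeg =
    Cardinal.lift.{uG} (trdeg k K)

section Center

variable (A : Type*) [CommRing A] [Algebra A K]

/-- The valuation applied to an element of a subring `A` of `K`. -/
def vA (a : A) : Γ := w.v (algebraMap A K a)

/-- `w` is centered on `Spec A`, i.e. `A ⊆ R_v`. -/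
def CenteredOnSpec : Prop := ∀ a : A, a ≠ 0 → 0 ≤ w.vA A a

/-- `w` is centered on the local ring `A`, i.e. `A ⊆ R_v` and `𝔪_A = 𝔪_v ∩ A`. -/
def CenteredAt [IsLocalRing A] : Prop :=
  w.CenteredOnSpec A ∧
    ∀ a : A, a ∈ IsLocalRing.maximalIdeal A ↔ (a = 0 ∨ 0 < w.vA A a)

variable {A}
variable (hinj : Function.Injective (algebraMap A K)) (hc : w.CenteredOnSpec A)

/-- The valuation ideal `𝔞_m(A) = {a ∈ A : v(a) ≥ m}`. -/
def valIdeal (m : Γ) : Ideal A where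
  carrier := {a : A | a = 0 ∨ m ≤ w.vA A a}
  zero_mem' := Or.inl rfl
  add_mem' := by
    intro a b ha hb
    by_cases hab : a + b = 0
    · exact Or.inl hab
    by_cases ha0 : a = 0
    · subst ha0; rw [zero_add] at hab ⊢; exact hb
    by_cases hb0 : b = 0
    · subst hb0; rw [add_zero] at hab ⊢; exact ha
    rcases ha with rfl | ha
    · exact absurd rfl ha0
    rcases hb with rfl | hb
    · exact absurd rfl hb0
    refine Or.inr ?_
    have hia : algebraMap A K a ≠ 0 := fun h => ha0 (hinj (h.trans (map_zero _).symm))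
    have hib : algebraMap A K b ≠ 0 := fun h => hb0 (hinj (h.trans (map_zero _).symm))
    have hiab : algebraMap A K a + algebraMap A K b ≠ 0 := by
      rw [← map_add]
      exact fun h => hab (hinj (h.trans (map_zero _).symm))
    have hmin := w.v_add _ _ hia hib hiab
    refine le_trans (le_min ha hb) ?_
    simpa [vA, map_add] using hmin
  smul_mem' := by
    intro c a ha
    rw [smul_eq_mul]
    by_cases hca : c * a = 0
    · exact Or.inl hca
    have hc0 : c ≠ 0 := left_ne_zero_of_mul hca
    have ha0 : a ≠ 0 := right_ne_zero_of_mul hca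
    rcases ha with rfl | ha
    · exact absurd rfl ha0
    refine Or.inr ?_
    have hic : algebraMap A K c ≠ 0 := fun h => hc0 (hinj (h.trans (map_zero _).symm))
    have hia : algebraMap A K a ≠ 0 := fun h => ha0 (hinj (h.trans (map_zero _).symm))
    have hm : w.vA A (c * a) = w.vA A c + w.vA A a := by
      simpa [vA, map_mul] using w.v_mul _ _ hic hia
    rw [hm]
    exact le_trans ha (le_add_of_nonneg_left (hc c hc0))

/-- The center of `w` on `Spec A` : the prime ideal `{a ∈ A : v(a) > 0}`. -/
def centerIdeal : Ideal A where
  carrier := {a : A | a = 0 ∨ 0 < w.vA A a}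
  zero_mem' := Or.inl rfl
  add_mem' := by
    intro a b ha hb
    by_cases hab : a + b = 0
    · exact Or.inl hab
    by_cases ha0 : a = 0
    · subst ha0; rw [zero_add] at hab ⊢; exact hb
    by_cases hb0 : b = 0
    · subst hb0; rw [add_zero] at hab ⊢; exact ha
    rcases ha with rfl | ha
    · exact absurd rfl ha0
    rcases hb with rfl | hb
    · exact absurd rfl hb0
    refine Or.inr ?_
    have hia : algebraMap A K a ≠ 0 := fun h => ha0 (hinj (h.trans (map_zero _).symm))
    have hib : algebraMap A K b ≠ 0 := fun h => hb0 (hinj (h.trans (map_zero _).symm))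
    have hiab : algebraMap A K a + algebraMap A K b ≠ 0 := by
      rw [← map_add]
      exact fun h => hab (hinj (h.trans (map_zero _).symm))
    have hmin := w.v_add _ _ hia hib hiab
    refine lt_of_lt_of_le (lt_min ha hb) ?_
    simpa [vA, map_add] using hmin
  smul_mem' := by
    intro c a ha
    rw [smul_eq_mul]
    by_cases hca : c * a = 0
    · exact Or.inl hca
    have hc0 : c ≠ 0 := left_ne_zero_of_mul hca
    have ha0 : a ≠ 0 := right_ne_zero_of_mul hca
    rcases ha with rfl | ha
    · exact absurd rfl ha0
    refine Or.inr ?_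
    have hic : algebraMap A K c ≠ 0 := fun h => hc0 (hinj (h.trans (map_zero _).symm))
    have hia : algebraMap A K a ≠ 0 := fun h => ha0 (hinj (h.trans (map_zero _).symm))
    have hm : w.vA A (c * a) = w.vA A c + w.vA A a := by
      simpa [vA, map_mul] using w.v_mul _ _ hic hia
    rw [hm]
    exact add_pos_of_nonneg_of_pos (hc c hc0) ha

end Center

end ValG

section TestIdeals

variable (R : Type*) [CommRing R] (p : ℕ)

/-- `R` is F-finite: it is a finitely generated module over itself via the Frobenius,
i.e. a finite set `s` spans `R` over the subring of `p`-th powers. -/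
def FFinite : Prop :=
  ∃ s : Finset R, ∀ x : R, ∃ c : R → R, x = s.sum fun y => c y ^ p * y

/-- `φ : R → R` is a `p^{-e}`-linear map, i.e. `φ (r^{p^e} x) = r * φ x`. -/
def PLinear (e : ℕ) (φ : R →+ R) : Prop := ∀ r x : R, φ (r ^ p ^ e * x) = r * φ x

/-- `J` satisfies the test-ideal closure condition for the pair `(R, 𝔞^t)` :
for every `e ≥ 1` and every `p^{-e}`-linear map `φ`, `φ(J · 𝔞^{⌈t(p^e - 1)⌉}) ⊆ J`. -/
def TestClosed (𝔞 : Ideal R) (t : ℝ) (J : Ideal R) : Prop :=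
  ∀ e : ℕ, 0 < e → ∀ φ : R →+ R, PLinear R p e φ →
    ∀ z ∈ J * 𝔞 ^ ⌈t * ((p : ℝ) ^ e - 1)⌉₊, φ z ∈ J

/-- `τ` is the test ideal `τ(R, 𝔞^t)` : the smallest nonzero ideal satisfying
the test-ideal closure condition. -/
def IsTestIdeal (𝔞 : Ideal R) (t : ℝ) (τ : Ideal R) : Prop :=
  τ ≠ ⊥ ∧ TestClosed R p 𝔞 t τ ∧
    ∀ J : Ideal R, J ≠ ⊥ → TestClosed R p 𝔞 t J → τ ≤ J

/-- `T` is the `m`-th asymptotic test ideal `τ_m(R, 𝔞_•)` of a graded family `a` of ideals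
indexed by `Φ ⊆ ℝ` : it equals `τ(R, 𝔞_{ℓm}^{1/ℓ})` for some `ℓ` and contains
`τ(R, 𝔞_{ℓm}^{1/ℓ})` for every `ℓ`. -/
def IsAsympTestIdeal (Φ : Set ℝ) (a : ℝ → Ideal R) (m : ℝ) (T : Ideal R) : Prop :=
  (∃ ℓ : ℕ, 0 < ℓ ∧ ((ℓ : ℝ) * m) ∈ Φ ∧ IsTestIdeal R p (a ((ℓ : ℝ) * m)) (1 / (ℓ : ℝ)) T) ∧
    ∀ ℓ : ℕ, 0 < ℓ → ((ℓ : ℝ) * m) ∈ Φ →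
      ∀ J : Ideal R, IsTestIdeal R p (a ((ℓ : ℝ) * m)) (1 / (ℓ : ℝ)) J → J ≤ T

end TestIdeals

section Regular

/-- A Noetherian local ring is regular if its maximal ideal is generated by
`dim A` many elements. -/
def IsRegLocal (A : Type*) [CommRing A] [IsLocalRing A] : Prop :=
  IsNoetherianRing A ∧
    ∃ (n : ℕ) (x : Fin n → A), Ideal.span (Set.range x) = IsLocalRing.maximalIdeal A ∧
      ringKrullDim A = n

/-- A ring is regular if it is Noetherian and all of its localizations at primes are
regular local rings. -/
def IsRegRing (A : Type*) [CommRing A] : Prop :=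
  IsNoetherianRing A ∧
    ∀ (P : Ideal A) (_ : P.IsPrime), IsRegLocal (Localization.AtPrime P)

end Regular

universe uE

/-- `B` is essentially étale over `A` : formally étale, and a localization of a finitely
presented `A`-algebra. -/
def EssentiallyEtale (A B : Type uE) [CommRing A] [CommRing B] [Algebra A B] : Prop :=
  Algebra.FormallyEtale A B ∧
    ∃ (C : Type uE) (_ : CommRing C) (_ : Algebra A C) (_ : Algebra C B)
      (_ : IsScalarTower A C B) (S : Submonoid C),
      Algebra.FinitePresentation A C ∧ IsLocalization S B

end Paper
namespace Paper

/-- A real-valued valuation of a field `K` (no base field). -/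
structure RealValF (K : Type*) [Field K] where
  v : K → ℝ
  v_mul : ∀ x y : K, x ≠ 0 → y ≠ 0 → v (x * y) = v x + v y
  v_add : ∀ x y : K, x ≠ 0 → y ≠ 0 → x + y ≠ 0 → min (v x) (v y) ≤ v (x + y)

end Paper

open Paper

/-!
Write `𝔪 = (x₁, …, x_d)` and pick `D` with `D · minᵢ v(xᵢ) ≥ m`, so that `𝔪^D` lies in the
monomial ideal `I`. Modulo `𝔪^D`, every `a ∈ A` is a combination of distinct monomials whose
coefficients lie outside `𝔪`, hence have value `0`. Distinct monomials have distinct values, so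
the part of this combination made of monomials of value `< m`, if nonempty, has value `< m`.
When `v(a) ≥ m` it also has value `≥ m`, as `a` minus elements of `I`; so it is empty and `a ∈ I`.
-/

namespace AddValuation

variable {A Γ₀ : Type*} [CommRing A] [LinearOrderedAddCommMonoidWithTop Γ₀] (v : AddValuation A Γ₀)

theorem map_prod {ι : Type*} (s : Finset ι) (f : ι → A) :
    v (∏ i ∈ s, f i) = ∑ i ∈ s, v (f i) := by
  classical
  induction s using Finset.induction_on with
  | empty => simp
  | insert i s hi ih => rw [Finset.prod_insert hi, Finset.sum_insert hi, map_mul, ih]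

theorem exists_map_sum_eq_of_injOn {ι : Type*} {s : Finset ι} (hs : s.Nonempty) {f : ι → A}
    (hf : Set.InjOn (fun i => v (f i)) s) : ∃ j ∈ s, v (∑ i ∈ s, f i) = v (f j) := by
  classical
  obtain ⟨j, hj, hmin⟩ := s.exists_min_image (fun i => v (f i)) hs
  refine ⟨j, hj, ?_⟩
  rw [← Finset.add_sum_erase s f hj]
  rcases (s.erase j).eq_empty_or_nonempty with he | ⟨i, hi⟩
  · rw [he, Finset.sum_empty, add_zero]
  have hlt : ∀ i ∈ s.erase j, v (f j) < v (f i) := fun i hi =>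
    (hmin i (Finset.mem_of_mem_erase hi)).lt_of_ne fun h =>
      Finset.ne_of_mem_erase hi (hf (Finset.mem_of_mem_erase hi) hj h.symm)
  exact v.map_add_eq_of_lt_left (v.map_lt_sum' ((hlt i hi).trans_le le_top) hlt)

theorem le_of_mem_span (hv : ∀ a, 0 ≤ v a) {s : Set A} {γ : Γ₀} (hs : ∀ z ∈ s, γ ≤ v z)
    {a : A} (ha : a ∈ Ideal.span s) : γ ≤ v a := by
  induction ha using Submodule.span_induction with
  | mem z hz => exact hs z hz
  | zero => simp
  | add a b _ _ ha hb => exact v.map_le_add ha hb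
  | smul c a _ ha => rw [smul_eq_mul, map_mul]; exact ha.trans (le_add_of_nonneg_left (hv c))

end AddValuation

section Monomials

variable {ι A : Type*} [Fintype ι] [CommRing A] (x : ι → A)

theorem prod_pow_mem_span_range_pow (α : ι →₀ ℕ) :
    ∏ i, x i ^ α i ∈ Ideal.span (Set.range x) ^ α.degree := by
  rw [Finsupp.degree_eq_sum, ← Finset.prod_pow_eq_pow_sum]
  exact Ideal.prod_mem_prod fun i _ =>
    Ideal.pow_mem_pow (Ideal.subset_span (Set.mem_range_self i)) _

theorem exists_eq_sum_of_mem_span_range_pow {D : ℕ} {r : A}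
    (hr : r ∈ Ideal.span (Set.range x) ^ D) :
    ∃ (S : Finset (ι →₀ ℕ)) (c : (ι →₀ ℕ) → A),
      (∀ α ∈ S, α.degree = D) ∧ r = ∑ α ∈ S, c α * ∏ i, x i ^ α i := by
  obtain ⟨p, hp, rfl⟩ := (Ideal.mem_span_pow_iff_exists_isHomogeneous x r).1 hr
  refine ⟨p.support, p.coeff, fun α hα => ?_, MvPolynomial.eval_eq' x p⟩
  rw [Finsupp.degree_eq_weight_one]
  exact hp (MvPolynomial.mem_support_iff.1 hα)

theorem exists_sub_sum_mem_span_range_pow (D : ℕ) (a : A) :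
    ∃ (S : Finset (ι →₀ ℕ)) (u : (ι →₀ ℕ) → A),
      (∀ α ∈ S, α.degree < D ∧ u α ∉ Ideal.span (Set.range x)) ∧
      a - ∑ α ∈ S, u α * ∏ i, x i ^ α i ∈ Ideal.span (Set.range x) ^ D := by
  classical
  induction D with
  | zero => exact ⟨∅, 0, by simp, by simp⟩
  | succ D ih =>
    obtain ⟨S, u, hSu, hS⟩ := ih
    obtain ⟨T, c, hT, hr⟩ := exists_eq_sum_of_mem_span_range_pow x hS
    set J := Ideal.span (Set.range x)
    have hnS : ∀ α ∈ T, α ∉ S := fun α hα hαS => (hSu α hαS).1.ne (hT α hα)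
    refine ⟨S ∪ T.filter (c · ∉ J), fun α => if α ∈ S then u α else c α, ?_, ?_⟩
    · intro α hα
      rcases Finset.mem_union.1 hα with hαS | hαT
      · simp only [if_pos hαS]
        exact ⟨(hSu α hαS).1.trans (Nat.lt_succ_self D), (hSu α hαS).2⟩
      · obtain ⟨hαT, hc⟩ := Finset.mem_filter.1 hαT
        simp [hnS α hαT, hT α hαT, hc]
    · simp only [ite_mul]
      rw [Finset.sum_union (Finset.disjoint_right.2 fun α hα => hnS α (Finset.mem_filter.1 hα).1),
        Finset.sum_ite_of_true fun α hα => hα,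
        Finset.sum_ite_of_false fun α hα => hnS α (Finset.mem_filter.1 hα).1,
        sub_add_eq_sub_sub, hr, ← Finset.sum_filter_not_add_sum_filter T (c · ∉ J),
        add_sub_cancel_right]
      refine Ideal.sum_mem _ fun α hα => ?_
      obtain ⟨hαT, hc⟩ := Finset.mem_filter.1 hα
      rw [pow_succ']
      exact Ideal.mul_mem_mul (not_not.1 hc) (hT α hαT ▸ prod_pow_mem_span_range_pow x α)

end Monomials

namespace AddValuation

variable {ι A : Type*} [Fintype ι] [CommRing A] (v : AddValuation A (WithTop ℝ)) {x : ι → A}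

variable (x) in
def monomialIdeal (γ : WithTop ℝ) : Ideal A :=
  Ideal.span {z | ∃ α : ι → ℕ, γ ≤ v (∏ i, x i ^ α i) ∧ z = ∏ i, x i ^ α i}

theorem exists_pos_coe_le_of_pos (hx : ∀ i, 0 < v (x i)) :
    ∃ ε : ℝ, 0 < ε ∧ ∀ i, (ε : WithTop ℝ) ≤ v (x i) := by
  obtain ⟨γ, hγ0, hγ⟩ := exists_between
    ((Finset.lt_inf_iff (WithTop.coe_lt_top 0)).2 fun i _ => hx i :
      (0 : WithTop ℝ) < Finset.univ.inf fun i => v (x i))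
  lift γ to ℝ using hγ.ne_top
  exact ⟨γ, WithTop.coe_pos.1 hγ0, fun i => hγ.le.trans (Finset.inf_le (Finset.mem_univ i))⟩

theorem coe_mul_le_map_prod_pow {ε : ℝ} (hε : ∀ i, (ε : WithTop ℝ) ≤ v (x i)) (α : ι →₀ ℕ) :
    ((α.degree * ε : ℝ) : WithTop ℝ) ≤ v (∏ i, x i ^ α i) := by
  rw [map_prod, Finsupp.degree_eq_sum, Nat.cast_sum, Finset.sum_mul, WithTop.coe_sum]
  refine Finset.sum_le_sum fun i _ => ?_
  rw [map_pow, ← nsmul_eq_mul, WithTop.coe_nsmul]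
  exact nsmul_le_nsmul_right (hε i) _

theorem span_range_pow_le_monomialIdeal {ε m : ℝ} (hε : ∀ i, (ε : WithTop ℝ) ≤ v (x i))
    {D : ℕ} (hD : m ≤ D * ε) : Ideal.span (Set.range x) ^ D ≤ v.monomialIdeal x m := by
  intro r hr
  obtain ⟨S, c, hS, rfl⟩ := exists_eq_sum_of_mem_span_range_pow x hr
  refine Ideal.sum_mem _ fun α hα => Ideal.mul_mem_left _ _ (Ideal.subset_span ⟨α, ?_, rfl⟩)
  calc (m : WithTop ℝ) ≤ ((α.degree * ε : ℝ) : WithTop ℝ) := by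
        rw [hS α hα]; exact_mod_cast hD
    _ ≤ _ := v.coe_mul_le_map_prod_pow hε α

/-- Coefficients outside the center have value `0`, so the terms have pairwise distinct values
and the smallest one is the value of the sum. -/
theorem map_sum_mul_prod_pow_lt (hv : ∀ a, 0 ≤ v a)
    (hJ : ∀ a, a ∈ Ideal.span (Set.range x) ↔ 0 < v a)
    (hinj : Set.InjOn (fun α : ι → ℕ => v (∏ i, x i ^ α i)) {α | v (∏ i, x i ^ α i) ≠ ⊤})
    {γ : WithTop ℝ} {T : Finset (ι →₀ ℕ)} (hT : T.Nonempty) {u : (ι →₀ ℕ) → A}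
    (hu : ∀ α ∈ T, u α ∉ Ideal.span (Set.range x)) (hlt : ∀ α ∈ T, v (∏ i, x i ^ α i) < γ) :
    v (∑ α ∈ T, u α * ∏ i, x i ^ α i) < γ := by
  have hval : ∀ α ∈ T, v (u α * ∏ i, x i ^ α i) = v (∏ i, x i ^ α i) := fun α hα => by
    rw [map_mul, le_antisymm (not_lt.1 (mt (hJ _).2 (hu α hα))) (hv _), zero_add]
  obtain ⟨j, hj, hsum⟩ := v.exists_map_sum_eq_of_injOn hT
    (f := fun α => u α * ∏ i, x i ^ α i) fun α hα β hβ h => by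
      simp only [hval α hα, hval β hβ] at h
      exact DFunLike.coe_injective
        (hinj ((hlt α hα).trans_le le_top).ne ((hlt β hβ).trans_le le_top).ne h)
  rw [hsum, hval j hj]
  exact hlt j hj

theorem setOf_le_eq_monomialIdeal (hv : ∀ a, 0 ≤ v a)
    (hJ : ∀ a, a ∈ Ideal.span (Set.range x) ↔ 0 < v a)
    (hinj : Set.InjOn (fun α : ι → ℕ => v (∏ i, x i ^ α i)) {α | v (∏ i, x i ^ α i) ≠ ⊤})
    (m : ℝ) :
    {a | (m : WithTop ℝ) ≤ v a} = v.monomialIdeal x m := by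
  classical
  set I := v.monomialIdeal x m
  have hI : ∀ b ∈ I, (m : WithTop ℝ) ≤ v b :=
    fun b => v.le_of_mem_span hv (by rintro _ ⟨α, hα, rfl⟩; exact hα)
  ext a
  refine ⟨fun ha => ?_, hI a⟩
  obtain ⟨ε, hε, hεx⟩ := v.exists_pos_coe_le_of_pos fun i =>
    (hJ _).1 (Ideal.subset_span (Set.mem_range_self i))
  obtain ⟨D, hD⟩ := exists_nat_ge (m / ε)
  have hJD := v.span_range_pow_le_monomialIdeal hεx ((div_le_iff₀ hε).1 hD)
  obtain ⟨S, u, hS, haS⟩ := exists_sub_sum_mem_span_range_pow x D a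
  rw [← Finset.sum_filter_add_sum_filter_not S fun α => (m : WithTop ℝ) ≤ v (∏ i, x i ^ α i)]
    at haS
  set Sge := S.filter fun α => (m : WithTop ℝ) ≤ v (∏ i, x i ^ α i)
  set Slt := S.filter fun α => ¬(m : WithTop ℝ) ≤ v (∏ i, x i ^ α i)
  set Pge := ∑ α ∈ Sge, u α * ∏ i, x i ^ α i
  set Plt := ∑ α ∈ Slt, u α * ∏ i, x i ^ α i
  have hge : Pge ∈ I := Ideal.sum_mem _ fun α hα =>
    Ideal.mul_mem_left _ _ (Ideal.subset_span ⟨α, (Finset.mem_filter.1 hα).2, rfl⟩)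
  have hPlt : Plt = 0 := by
    obtain he | hne := Slt.eq_empty_or_nonempty
    · simp only [Plt, he, Finset.sum_empty]
    have hlt : v Plt < m := v.map_sum_mul_prod_pow_lt hv hJ hinj hne
      (fun α hα => (hS α (Finset.mem_filter.1 hα).1).2)
      fun α hα => not_le.1 (Finset.mem_filter.1 hα).2
    refine (hlt.not_ge ?_).elim
    rw [show Plt = a - (a - (Pge + Plt)) - Pge by ring]
    exact v.map_le_sub (v.map_le_sub ha (hI _ (hJD haS))) (hI _ hge)
  rw [hPlt, add_zero] at haS
  simpa using I.add_mem (hJD haS) hge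

variable {r : ι → ℝ}

theorem map_prod_pow_eq_coe (hr : ∀ i, x i ≠ 0 → v (x i) = r i) {α : ι → ℕ}
    (hα : ∏ i, x i ^ α i ≠ 0) : v (∏ i, x i ^ α i) = ((∑ i, (α i : ℝ) * r i : ℝ) : WithTop ℝ) := by
  rw [map_prod, WithTop.coe_sum]
  refine Finset.sum_congr rfl fun i _ => ?_
  rcases eq_or_ne (α i) 0 with h0 | h0
  · simp [h0]
  have hxi : x i ≠ 0 := fun hxi => hα (Finset.prod_eq_zero (Finset.mem_univ i) (by simp [hxi, h0]))
  rw [map_pow, hr i hxi, ← WithTop.coe_nsmul, nsmul_eq_mul]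

theorem injOn_map_prod_pow (hr : ∀ i, x i ≠ 0 → v (x i) = r i)
    (hind : ∀ c : ι → ℤ, ∑ i, (c i : ℝ) * r i = 0 → c = 0) :
    Set.InjOn (fun α : ι → ℕ => v (∏ i, x i ^ α i)) {α | v (∏ i, x i ^ α i) ≠ ⊤} := by
  intro α hα β hβ h
  have hne : ∀ {γ : ι → ℕ}, v (∏ i, x i ^ γ i) ≠ ⊤ → ∏ i, x i ^ γ i ≠ 0 :=
    fun hγ h0 => hγ (by rw [h0, map_zero])
  simp only [map_prod_pow_eq_coe v hr (hne hα), map_prod_pow_eq_coe v hr (hne hβ),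
    WithTop.coe_inj] at h
  have := hind (fun i => α i - β i) (by simpa [sub_mul] using sub_eq_zero.2 h)
  funext i
  simpa [sub_eq_zero] using congrFun this i

theorem monomialIdeal_coe_eq_span (hr : ∀ i, x i ≠ 0 → v (x i) = r i) (m : ℝ) :
    v.monomialIdeal x m =
      Ideal.span {z | ∃ α : ι → ℕ, m ≤ ∑ i, (α i : ℝ) * r i ∧ z = ∏ i, x i ^ α i} := by
  rw [monomialIdeal, ← Ideal.span_sdiff_singleton_zero, ← Ideal.span_sdiff_singleton_zero
    (s := {z | ∃ α : ι → ℕ, m ≤ ∑ i, (α i : ℝ) * r i ∧ z = ∏ i, x i ^ α i})]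
  congr 1
  ext z
  simp only [Set.mem_sdiff, Set.mem_ofPred_eq, Set.mem_singleton_iff]
  refine and_congr_left fun hz => exists_congr fun α => and_congr_left fun hzα => ?_
  rw [map_prod_pow_eq_coe v hr (hzα ▸ hz), WithTop.coe_le_coe]

end AddValuation

namespace Paper.RealValF

variable {K : Type*} [Field K] (w : RealValF K)

theorem v_one : w.v 1 = 0 := by
  simpa using w.v_mul 1 1 one_ne_zero one_ne_zero

open Classical in
noncomputable def toAddValuation : AddValuation K (WithTop ℝ) :=
  AddValuation.of (fun a => if a = 0 then ⊤ else (w.v a : WithTop ℝ)) (if_pos rfl)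
    (by simp [w.v_one])
    (fun a b => by
      by_cases ha : a = 0; · simp [ha]
      by_cases hb : b = 0; · simp [hb]
      by_cases hab : a + b = 0; · simp [hab]
      simpa [ha, hb, hab] using w.v_add a b ha hb hab)
    (fun a b => by
      by_cases ha : a = 0; · simp [ha]
      by_cases hb : b = 0; · simp [hb]
      simp [ha, hb, w.v_mul a b ha hb])

theorem toAddValuation_of_ne_zero {a : K} (ha : a ≠ 0) : w.toAddValuation a = w.v a :=
  if_neg ha

end Paper.RealValF

theorem statement6_general (K A : Type*) [Field K] [CommRing A] [IsLocalRing A]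
    [Algebra A K] [IsFractionRing A K]
    (w : RealValF K)
    (hc : (∀ a : A, a ≠ 0 → 0 ≤ w.v (algebraMap A K a)) ∧
      ∀ a : A, a ∈ IsLocalRing.maximalIdeal A ↔ (a = 0 ∨ 0 < w.v (algebraMap A K a)))
    (d : ℕ)
    (x : Fin d → A) (hx : Ideal.span (Set.range x) = IsLocalRing.maximalIdeal A)
    (hind : ∀ c : Fin d → ℤ, (∑ i, (c i : ℝ) * w.v (algebraMap A K (x i))) = 0 → c = 0) :
    ∀ m : ℝ, 0 < m →
      {a : A | a = 0 ∨ m ≤ w.v (algebraMap A K a)} =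
        ↑(Ideal.span {z : A | ∃ a : Fin d → ℕ,
          m ≤ (∑ i, (a i : ℝ) * w.v (algebraMap A K (x i))) ∧ z = ∏ i, x i ^ a i}) := by
  intro m _
  set v := w.toAddValuation.comap (algebraMap A K)
  have hv_of_ne : ∀ a : A, a ≠ 0 → v a = w.v (algebraMap A K a) := fun a ha =>
    w.toAddValuation_of_ne_zero ((map_ne_zero_iff _ (IsFractionRing.injective A K)).2 ha)
  have hv : ∀ a, 0 ≤ v a := fun a => by
    rcases eq_or_ne a 0 with rfl | ha
    · simp
    · simpa [hv_of_ne a ha] using hc.1 a ha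
  have hJ : ∀ a, a ∈ Ideal.span (Set.range x) ↔ 0 < v a := fun a => by
    rcases eq_or_ne a 0 with rfl | ha
    · simp
    · simp [hx, hc.2, ha, hv_of_ne a ha]
  rw [← v.monomialIdeal_coe_eq_span (fun i hi => hv_of_ne (x i) hi),
    ← v.setOf_le_eq_monomialIdeal hv hJ
      (v.injOn_map_prod_pow (fun i hi => hv_of_ne (x i) hi) hind) m]
  ext a
  rcases eq_or_ne a 0 with rfl | ha
  · simp
  · simp [ha, hv_of_ne a ha]

/-- **Final assertion of Proposition 2.5 (monomiality of valuation ideals).** Let `(A, 𝔪)` be a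
Noetherian regular local ring, `v` a real-valued valuation of `Frac A` centered on `A`, and
`x₁, …, x_d` a regular system of parameters of `A` whose values are `ℤ`-linearly independent.
Then for each real `m > 0` the valuation ideal `𝔞_m` is generated by the monomials
`x₁^{a₁} ⋯ x_d^{a_d}` with `∑ aᵢ v(xᵢ) ≥ m`. -/
theorem statement6 (K A : Type*) [Field K] [CommRing A] [IsDomain A] [IsLocalRing A]
    [Algebra A K] [IsFractionRing A K]
    [IsNoetherianRing A] (hreg : IsRegLocal A)
    (w : RealValF K)
    (hc : (∀ a : A, a ≠ 0 → 0 ≤ w.v (algebraMap A K a)) ∧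
      ∀ a : A, a ∈ IsLocalRing.maximalIdeal A ↔ (a = 0 ∨ 0 < w.v (algebraMap A K a)))
    (d : ℕ) (hd : ringKrullDim A = d)
    (x : Fin d → A) (hx : Ideal.span (Set.range x) = IsLocalRing.maximalIdeal A)
    (hind : ∀ c : Fin d → ℤ, (∑ i, (c i : ℝ) * w.v (algebraMap A K (x i))) = 0 → c = 0) :
    ∀ m : ℝ, 0 < m →
      {a : A | a = 0 ∨ m ≤ w.v (algebraMap A K a)} =
        ↑(Ideal.span {z : A | ∃ a : Fin d → ℕ,
          m ≤ (∑ i, (a i : ℝ) * w.v (algebraMap A K (x i))) ∧ z = ∏ i, x i ^ a i}) :=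
  statement6_general K A w hc d x hx hind
end
end

section
/- Let k be a perfect field of characteristic p > 0 and let R ⊆ S be an extension of regular, integral, finitely generated k-algebras with Frac(R) = Frac(S) = K. Let 𝔞_• = {𝔞_s}_{s∈Φ} be a graded family of nonzero ideals of S indexed by an additive sub-semigroup Φ ⊆ ℝ, and let 𝔞̃_• denote the graded family {𝔞_s ∩ R}_{s∈Φ} of nonzero ideals of R. If the intersection over all m ∈ Φ of the colon ideals (𝔞_m :_S τ_m(S, 𝔞_•)) is nonzero, then the intersection over all m ∈ Φ of the colon ideals (𝔞_m ∩ R :_R τ_m(R, 𝔞̃_•)) is nonzero. (Corollary 4.13(2).) -/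
open scoped TensorProduct

noncomputable section

open Paper

/-!
Every `p^{-e}`-linear map `φ` of `R` extends to the common fraction field `K`. If `f ∈ R` clears the
denominators of `k`-algebra generators `g` of `S`, then, since `k` is perfect, `S` is additively
spanned by the `t ^ {p^e} ∏ g ^ {α_g}` with `α_g < p^e`, and `f ^ B φ` maps all of them into `S`
(`B` the number of generators). So `f ^ B φ` extends to a `p^{-e}`-linear map of `S`, and hence
`f ^ B τ(R, 𝔞̃_{ℓm}^{1/ℓ})` lies in every nonzero ideal of `S` that is stable for `𝔞_{ℓm}^{1/ℓ}`,
that is, in `τ(S, 𝔞_{ℓm}^{1/ℓ}) ⊆ τ_m(S, 𝔞_•)`. If `c = d x ∈ R` is a nonzero multiple of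
the given `x`, then `r = f ^ B c` works.
-/

theorem Finset.prod_pow_eq_pow_div_mul_prod_pow_mod {M : Type*} [CommMonoid M] (s : Finset M)
    (α : M → ℕ) (q : ℕ) :
    ∏ g ∈ s, g ^ α g = (∏ g ∈ s, g ^ (α g / q)) ^ q * ∏ g ∈ s, g ^ (α g % q) := by
  rw [← Finset.prod_pow, ← Finset.prod_mul_distrib]
  refine Finset.prod_congr rfl fun g _ => ?_
  rw [← pow_mul, ← pow_add, Nat.div_add_mod']

namespace Paper

section Ceil

variable {p : ℕ} {t : ℝ}

theorem ceil_mul_pow_add_sub_one_le (e e' : ℕ) :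
    ⌈t * ((p : ℝ) ^ (e + e') - 1)⌉₊ ≤
      ⌈t * ((p : ℝ) ^ e - 1)⌉₊ + p ^ e * ⌈t * ((p : ℝ) ^ e' - 1)⌉₊ := by
  rw [Nat.ceil_le]
  push_cast
  have h₁ := Nat.le_ceil (t * ((p : ℝ) ^ e - 1))
  have h₂ := mul_le_mul_of_nonneg_left (Nat.le_ceil (t * ((p : ℝ) ^ e' - 1)))
    (pow_nonneg (Nat.cast_nonneg p) e)
  rw [pow_add]
  linarith

theorem ceil_mul_pow_sub_one_le [NeZero p] (ht : t ≤ 1) (e : ℕ) :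
    ⌈t * ((p : ℝ) ^ e - 1)⌉₊ ≤ p ^ e - 1 := by
  have hpe : 1 ≤ p ^ e := Nat.one_le_pow _ _ (Nat.pos_of_neZero p)
  rw [Nat.ceil_le, Nat.cast_sub hpe]
  push_cast
  have : (1 : ℝ) ≤ (p : ℝ) ^ e := by exact_mod_cast hpe
  nlinarith

theorem natCast_mul_ceil_le (M : ℕ) {x : ℝ} (hx : 0 ≤ x) : M * ⌈x⌉₊ ≤ ⌈M * x⌉₊ + M := by
  have h₁ := Nat.ceil_lt_add_one hx
  have h₂ := Nat.le_ceil ((M : ℝ) * x)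
  have h₃ := mul_le_mul_of_nonneg_left h₁.le (Nat.cast_nonneg (α := ℝ) M)
  exact_mod_cast (show (M : ℝ) * ⌈x⌉₊ ≤ ⌈(M : ℝ) * x⌉₊ + M by linarith)

end Ceil

namespace PLinear

variable {A : Type*} [CommRing A] {p e e' : ℕ} {φ ψ : A →+ A}

theorem comp (hφ : PLinear A p e φ) (hψ : PLinear A p e' ψ) :
    PLinear A p (e + e') (ψ.comp φ) := by
  intro r x
  rw [AddMonoidHom.comp_apply, AddMonoidHom.comp_apply, pow_add, mul_comm (p ^ e), pow_mul,
    hφ, hψ]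

theorem comp_mulLeft (hφ : PLinear A p e φ) (c : A) :
    PLinear A p e (φ.comp (AddMonoidHom.mulLeft c)) := by
  intro r x
  simp only [AddMonoidHom.comp_apply, AddMonoidHom.coe_mulLeft]
  rw [mul_left_comm, hφ]

end PLinear

section TestSpan

variable {A : Type*} [CommRing A] {p : ℕ} {𝔞 : Ideal A} {t : ℝ}

variable (p) in
def testSpan (𝔞 : Ideal A) (t : ℝ) (c : A) : Ideal A :=
  Ideal.span {y | ∃ e, 0 < e ∧ ∃ φ : A →+ A, PLinear A p e φ ∧
    ∃ u ∈ 𝔞 ^ ⌈t * ((p : ℝ) ^ e - 1)⌉₊, y = φ (c * u)}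

theorem apply_mem_testSpan {e : ℕ} (he : 0 < e) {φ : A →+ A} (hφ : PLinear A p e φ) (c : A)
    {u : A} (hu : u ∈ 𝔞 ^ ⌈t * ((p : ℝ) ^ e - 1)⌉₊) : φ (c * u) ∈ testSpan p 𝔞 t c :=
  Ideal.subset_span ⟨e, he, φ, hφ, u, hu, rfl⟩

theorem apply_mul_mem_testSpan {c v : A} (hv : v ∈ testSpan p 𝔞 t c) {e : ℕ} (he : 0 < e)
    {ψ : A →+ A} (hψ : PLinear A p e ψ) {w : A} (hw : w ∈ 𝔞 ^ ⌈t * ((p : ℝ) ^ e - 1)⌉₊) :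
    ψ (v * w) ∈ testSpan p 𝔞 t c := by
  induction hv using Submodule.span_induction generalizing ψ with
  | mem y hy =>
    obtain ⟨e₁, he₁, φ, hφ, u, hu, rfl⟩ := hy
    -- `φ (c u) w = φ (c u w^{p^e₁})`, and the exponents add up along `ψ ∘ φ`
    have hw' : w ^ p ^ e₁ ∈ 𝔞 ^ (p ^ e₁ * ⌈t * ((p : ℝ) ^ e - 1)⌉₊) := by
      rw [mul_comm, pow_mul]
      exact Ideal.pow_mem_pow hw _
    have huw : u * w ^ p ^ e₁ ∈ 𝔞 ^ ⌈t * ((p : ℝ) ^ (e₁ + e) - 1)⌉₊ :=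
      Ideal.pow_le_pow_right (ceil_mul_pow_add_sub_one_le e₁ e)
        (by rw [pow_add]; exact Ideal.mul_mem_mul hu hw')
    convert apply_mem_testSpan (by omega) (hφ.comp hψ) c huw using 1
    rw [AddMonoidHom.comp_apply, show c * (u * w ^ p ^ e₁) = w ^ p ^ e₁ * (c * u) by ring, hφ,
      mul_comm]
  | zero => simp
  | add v₁ v₂ _ _ ih₁ ih₂ =>
    rw [add_mul, map_add]
    exact add_mem (ih₁ hψ) (ih₂ hψ)
  | smul r v _ ih =>
    simpa [mul_assoc] using ih (hψ.comp_mulLeft r)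

theorem testClosed_testSpan (c : A) : TestClosed A p 𝔞 t (testSpan p 𝔞 t c) :=
  fun _ he _ hψ _ hz => Submodule.mul_induction_on hz
    (fun _ hv _ hw => apply_mul_mem_testSpan hv he hψ hw)
    (fun _ _ hx hy => by rw [map_add]; exact add_mem hx hy)

theorem testClosed_span_singleton_mul {c : A} (h : testSpan p 𝔞 t c = ⊥) (d : A) :
    TestClosed A p 𝔞 t (Ideal.span {c * d}) := by
  intro e he φ hφ z hz
  refine Submodule.mul_induction_on hz (fun v hv w hw => ?_)
    (fun _ _ hx hy => by rw [map_add]; exact add_mem hx hy)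
  obtain ⟨r, rfl⟩ := Ideal.mem_span_singleton'.mp hv
  have h₀ := apply_mem_testSpan he (hφ.comp_mulLeft (r * d)) c hw
  rw [h, Ideal.mem_bot, AddMonoidHom.comp_apply, AddMonoidHom.coe_mulLeft] at h₀
  rw [show r * (c * d) * w = r * d * (c * w) by ring, h₀]
  exact zero_mem _

theorem IsTestIdeal.le_testSpan [IsDomain A] [IsNoetherianRing A] (hA : ¬IsField A) {T : Ideal A}
    (hT : IsTestIdeal A p 𝔞 t T) {c : A} (hc0 : c ≠ 0) : T ≤ testSpan p 𝔞 t c := by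
  refine hT.2.2 _ (fun h => ?_) (testClosed_testSpan c)
  obtain ⟨d, hd0, hd⟩ := Ring.exists_not_isUnit_of_not_isField hA
  -- otherwise `T ⊆ (c d^n)` for all `n`, against Krull's intersection theorem
  have hTle : ∀ n : ℕ, T ≤ Ideal.span {d} ^ n := fun n =>
    (hT.2.2 _ (by simpa [Ideal.span_singleton_eq_bot] using mul_ne_zero hc0 (pow_ne_zero n hd0))
      (testClosed_span_singleton_mul h (d ^ n))).trans <| by
        rw [Ideal.span_singleton_pow]
        exact Ideal.span_singleton_le_span_singleton.mpr (dvd_mul_left _ _)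
  have hKrull : (⨅ n : ℕ, Ideal.span {d} ^ n) = ⊥ :=
    Ideal.iInf_pow_eq_bot_of_isDomain _ (by simpa [Ideal.span_singleton_eq_top] using hd)
  exact hT.1 (le_bot_iff.mp (hKrull ▸ le_iInf hTle))

end TestSpan

section Existence

variable {A : Type*} [CommRing A] {p : ℕ}

theorem testClosed_colon [NeZero p] {𝔟 J : Ideal A} {t : ℝ} (ht : t ≤ 1)
    (hJ : TestClosed A p 𝔟 t J) {w : A} (hw : w ∈ 𝔟) (𝔞 : Ideal A) (s : ℝ) :
    TestClosed A p 𝔞 s (J.colon {w}) := by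
  intro e he φ hφ z hz
  have hwz : w * z ∈ J := by
    have := Submodule.mem_colon_singleton.mp (Ideal.mul_le_left hz)
    rwa [smul_eq_mul, mul_comm] at this
  have hpe : p ^ e - 1 + 1 = p ^ e := Nat.sub_add_cancel (Nat.one_le_pow _ _ (Nat.pos_of_neZero p))
  -- `w φ(z) = φ(w^{p^e} z) = φ((w z) w^{p^e - 1})`
  have key : φ (w * z * w ^ (p ^ e - 1)) ∈ J :=
    hJ e he φ hφ _ (Ideal.mul_mem_mul hwz
      (Ideal.pow_le_pow_right (ceil_mul_pow_sub_one_le ht e) (Ideal.pow_mem_pow hw _)))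
  rw [Submodule.mem_colon_singleton, smul_eq_mul, mul_comm, ← hφ]
  convert key using 2
  rw [← hpe, pow_succ, hpe]
  ring

theorem exists_isTestIdeal_of_forall_subset {𝔞 : Ideal A} {t : ℝ} {s : Set A}
    (hs : ∃ x ∈ s, x ≠ 0) (h : ∀ J : Ideal A, J ≠ ⊥ → TestClosed A p 𝔞 t J → s ⊆ J) :
    ∃ τ, IsTestIdeal A p 𝔞 t τ ∧ s ⊆ τ := by
  set τ := sInf {J : Ideal A | J ≠ ⊥ ∧ TestClosed A p 𝔞 t J}
  have hsτ : s ⊆ τ := fun x hx => Submodule.mem_sInf.mpr fun J hJ => h J hJ.1 hJ.2 hx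
  obtain ⟨x, hx, hx0⟩ := hs
  refine ⟨τ, ⟨fun hτ => hx0 ?_, ?_, fun J hJ hJc => sInf_le ⟨hJ, hJc⟩⟩, hsτ⟩
  · simpa [hτ] using hsτ hx
  · intro e he φ hφ z hz
    exact Submodule.mem_sInf.mpr fun J hJ =>
      hJ.2 e he φ hφ z (Ideal.mul_mono_left (sInf_le hJ) hz)

/-- For `w ∈ 𝔟` and `J` stable for `𝔟^t`, the colon `(J : w)` is stable for every pair, so
`w τ(𝔞^s) ⊆ J`. -/
theorem IsTestIdeal.exists_isTestIdeal [NeZero p] [IsDomain A] {𝔞 𝔟 J₀ : Ideal A} {s t : ℝ}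
    (hJ₀ : IsTestIdeal A p 𝔞 s J₀) (h𝔟 : 𝔟 ≠ ⊥) (ht : t ≤ 1) :
    ∃ τ, IsTestIdeal A p 𝔟 t τ := by
  obtain ⟨w, hw, hw0⟩ := Submodule.exists_mem_ne_zero_of_ne_bot h𝔟
  obtain ⟨y, hy, hy0⟩ := Submodule.exists_mem_ne_zero_of_ne_bot hJ₀.1
  obtain ⟨τ, hτ, -⟩ := exists_isTestIdeal_of_forall_subset (p := p) (𝔞 := 𝔟) (t := t)
    (s := {w * y}) ⟨_, rfl, mul_ne_zero hw0 hy0⟩ fun J hJ hJc => by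
      have hcolon : J.colon {w} ≠ ⊥ := fun h =>
        hJ (eq_bot_iff.mpr fun z hz => h ▸ Submodule.mem_colon_singleton.mpr (J.mul_mem_right _ hz))
      have := hJ₀.2.2 _ hcolon (testClosed_colon ht hJc hw 𝔞 s) hy
      rw [Set.singleton_subset_iff, SetLike.mem_coe, mul_comm]
      exact Submodule.mem_colon_singleton.mp this
  exact ⟨τ, hτ⟩

theorem IsTestIdeal.le_of_pow_le [NeZero p] [IsDomain A] [IsNoetherianRing A] (hA : ¬IsField A)
    {𝔞₁ 𝔞₂ J τ : Ideal A} {M : ℕ} {t : ℝ} (ht : 0 ≤ t) (hJ : IsTestIdeal A p 𝔞₁ (M * t) J)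
    (hτ : TestClosed A p 𝔞₂ t τ) (hτ0 : τ ≠ ⊥) (hpow : 𝔞₁ ^ M ≤ 𝔞₂) (h𝔞₁ : 𝔞₁ ≠ ⊥) :
    J ≤ τ := by
  obtain ⟨y, hy, hy0⟩ := Submodule.exists_mem_ne_zero_of_ne_bot hτ0
  obtain ⟨v, hv, hv0⟩ := Submodule.exists_mem_ne_zero_of_ne_bot h𝔞₁
  refine (hJ.le_testSpan hA (mul_ne_zero hy0 (pow_ne_zero M hv0))).trans ?_
  rw [testSpan, Ideal.span_le]
  rintro _ ⟨e, he, φ, hφ, u, hu, rfl⟩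
  have hpe : (0 : ℝ) ≤ (p : ℝ) ^ e - 1 :=
    sub_nonneg.mpr (one_le_pow₀ (by exact_mod_cast Nat.pos_of_neZero p))
  have hceil : M * ⌈t * ((p : ℝ) ^ e - 1)⌉₊ ≤ M + ⌈M * t * ((p : ℝ) ^ e - 1)⌉₊ := by
    have := natCast_mul_ceil_le M (mul_nonneg ht hpe)
    rw [mul_assoc]
    omega
  have hvu : v ^ M * u ∈ 𝔞₂ ^ ⌈t * ((p : ℝ) ^ e - 1)⌉₊ := by
    refine Ideal.pow_right_mono hpow _ ?_
    rw [← pow_mul]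
    refine Ideal.pow_le_pow_right hceil ?_
    rw [pow_add]
    exact Ideal.mul_mem_mul (Ideal.pow_mem_pow hv M) hu
  rw [mul_assoc]
  exact hτ e he φ hφ _ (Ideal.mul_mem_mul hy hvu)

end Existence

section Asymptotic

variable {A : Type*} [CommRing A] {p : ℕ} {Φ : Set ℝ} {a : ℝ → Ideal A} {m : ℝ}

theorem natCast_mul_mem (hΦ : ∀ s ∈ Φ, ∀ t ∈ Φ, s + t ∈ Φ) (hm : m ∈ Φ) {n : ℕ} (hn : 0 < n) :
    (n : ℝ) * m ∈ Φ := by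
  induction n, hn using Nat.le_induction with
  | base => simpa using hm
  | succ n _ ih =>
    rw [Nat.cast_succ, add_one_mul]
    exact hΦ _ ih _ hm

theorem pow_le_natCast_mul (hΦ : ∀ s ∈ Φ, ∀ t ∈ Φ, s + t ∈ Φ)
    (hgr : ∀ s ∈ Φ, ∀ t ∈ Φ, a s * a t ≤ a (s + t)) (hm : m ∈ Φ) {n : ℕ} (hn : 0 < n) :
    a m ^ n ≤ a (n * m) := by
  induction n, hn using Nat.le_induction with
  | base => simp
  | succ n hn ih =>
    rw [pow_succ, Nat.cast_succ, add_one_mul]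
    exact (Ideal.mul_mono_left ih).trans (hgr _ (natCast_mul_mem hΦ hm hn) _ hm)

/-- A maximal test ideal `τ(𝔞_{n₀ m}^{1/n₀})` (Noetherianity) is the asymptotic one: every
`τ(𝔞_{n m}^{1/n})` and it both lie in `τ(𝔞_{n n₀ m}^{1/(n n₀)})`, which by maximality is it. -/
theorem exists_isAsympTestIdeal [NeZero p] [IsDomain A] [IsNoetherianRing A] (hA : ¬IsField A)
    (hΦ : ∀ s ∈ Φ, ∀ t ∈ Φ, s + t ∈ Φ) (hgr : ∀ s ∈ Φ, ∀ t ∈ Φ, a s * a t ≤ a (s + t))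
    (hne : ∀ s ∈ Φ, a s ≠ ⊥) (hm : m ∈ Φ) {ℓ : ℕ} (hℓ : 0 < ℓ) {τ : Ideal A}
    (hτ : IsTestIdeal A p (a (ℓ * m)) (1 / ℓ) τ) :
    ∃ T, IsAsympTestIdeal A p Φ a m T ∧ τ ≤ T := by
  have hmul : ∀ {n l : ℕ} {J τ' : Ideal A}, 0 < n → 0 < l →
      IsTestIdeal A p (a (n * m)) (1 / n) J →
      IsTestIdeal A p (a ((n * l : ℕ) * m)) (1 / (n * l : ℕ)) τ' → J ≤ τ' := by
    intro n l J τ' hn hl hJ hτ'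
    have hnm := natCast_mul_mem hΦ hm hn
    refine IsTestIdeal.le_of_pow_le hA (M := l) (by positivity) ?_ hτ'.2.1 hτ'.1 ?_ (hne _ hnm)
    · convert hJ using 2
      push_cast
      field_simp
    · convert pow_le_natCast_mul hΦ hgr hnm hl using 2
      push_cast
      ring
  obtain ⟨T, ⟨n₀, hn₀, hT⟩, hmax⟩ := set_has_maximal_iff_noetherian.mpr ‹IsNoetherianRing A›
    {T | ∃ n : ℕ, 0 < n ∧ IsTestIdeal A p (a (n * m)) (1 / n) T} ⟨τ, ℓ, hℓ, hτ⟩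
  have hle : ∀ n : ℕ, 0 < n → ∀ J, IsTestIdeal A p (a (n * m)) (1 / n) J → J ≤ T := by
    intro n hn J hJ
    have hnn₀ := Nat.mul_pos hn hn₀
    obtain ⟨τ', hτ'⟩ := hJ.exists_isTestIdeal (hne _ (natCast_mul_mem hΦ hm hnn₀))
      (t := 1 / (n * n₀ : ℕ)) (div_le_one_of_le₀ (by exact_mod_cast hnn₀) (Nat.cast_nonneg _))
    have hTτ' : T = τ' := eq_of_le_of_not_lt (hmul hn₀ hn hT (by rwa [Nat.mul_comm]))
      (hmax τ' ⟨_, hnn₀, hτ'⟩)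
    exact hTτ' ▸ hmul hn hn₀ hJ hτ'
  exact ⟨T, ⟨⟨n₀, hn₀, natCast_mul_mem hΦ hm hn₀, hT⟩, fun n hn _ => hle n hn⟩, hle ℓ hℓ τ hτ⟩

end Asymptotic

section FractionField

variable {R K : Type*} [CommRing R] [IsDomain R] [Field K] [Algebra R K] [IsFractionRing R K]
  {p e : ℕ} {φ : R →+ R}

theorem exists_mul_pow_eq {q : ℕ} (hq : 0 < q) (ξ : K) :
    ∃ z d : R, d ≠ 0 ∧ ξ * algebraMap R K d ^ q = algebraMap R K z := by
  obtain ⟨⟨x, y⟩, hxy⟩ := IsLocalization.surj (nonZeroDivisors R) ξ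
  refine ⟨x * y ^ (q - 1), y, nonZeroDivisors.coe_ne_zero y, ?_⟩
  rw [map_mul, map_pow, ← hxy, mul_assoc, ← pow_succ', Nat.sub_add_cancel hq]

variable (K) in
/-- `φ(z / d ^ q) := φ(z) / d`, using the representative `x / y = x y^{q-1} / y^q` of `sec`. -/
def fracExtend (q : ℕ) (φ : R →+ R) (ξ : K) : K :=
  algebraMap R K (φ ((IsLocalization.sec (nonZeroDivisors R) ξ).1 *
      (IsLocalization.sec (nonZeroDivisors R) ξ).2 ^ (q - 1))) /
    algebraMap R K (IsLocalization.sec (nonZeroDivisors R) ξ).2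

theorem PLinear.div_eq_div (hφ : PLinear R p e φ) {ξ : K} {z d z' d' : R} (hd : d ≠ 0)
    (hd' : d' ≠ 0) (h : ξ * algebraMap R K d ^ p ^ e = algebraMap R K z)
    (h' : ξ * algebraMap R K d' ^ p ^ e = algebraMap R K z') :
    algebraMap R K (φ z) / algebraMap R K d = algebraMap R K (φ z') / algebraMap R K d' := by
  have hzz' : d' ^ p ^ e * z = d ^ p ^ e * z' := IsFractionRing.injective R K <| by
    simp only [map_mul, map_pow, ← h, ← h']
    ring
  have key : d' * φ z = d * φ z' := by rw [← hφ, ← hφ, hzz']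
  rw [div_eq_div_iff (IsFractionRing.to_map_ne_zero_of_mem_nonZeroDivisors
      (mem_nonZeroDivisors_of_ne_zero hd))
    (IsFractionRing.to_map_ne_zero_of_mem_nonZeroDivisors (mem_nonZeroDivisors_of_ne_zero hd')),
    ← map_mul, ← map_mul, mul_comm, key, mul_comm]

theorem PLinear.fracExtend_eq [NeZero p] (hφ : PLinear R p e φ) {ξ : K} {z d : R} (hd : d ≠ 0)
    (h : ξ * algebraMap R K d ^ p ^ e = algebraMap R K z) :
    fracExtend K (p ^ e) φ ξ = algebraMap R K (φ z) / algebraMap R K d := by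
  set x := IsLocalization.sec (nonZeroDivisors R) ξ
  refine hφ.div_eq_div (nonZeroDivisors.coe_ne_zero x.2) hd ?_ h
  rw [map_mul, map_pow, ← IsLocalization.sec_spec, mul_assoc, ← pow_succ',
    Nat.sub_add_cancel (Nat.pos_of_neZero _)]

theorem PLinear.fracExtend_algebraMap [NeZero p] (hφ : PLinear R p e φ) (z : R) :
    fracExtend K (p ^ e) φ (algebraMap R K z) = algebraMap R K (φ z) := by
  rw [hφ.fracExtend_eq (z := z) one_ne_zero (by simp), map_one, div_one]

theorem PLinear.fracExtend_zero [NeZero p] (hφ : PLinear R p e φ) :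
    fracExtend K (p ^ e) φ 0 = 0 := by
  simpa using hφ.fracExtend_algebraMap (K := K) 0

theorem PLinear.fracExtend_add [NeZero p] (hφ : PLinear R p e φ) (ξ η : K) :
    fracExtend K (p ^ e) φ (ξ + η) = fracExtend K (p ^ e) φ ξ + fracExtend K (p ^ e) φ η := by
  obtain ⟨z, d, hd, h⟩ := exists_mul_pow_eq (R := R) (Nat.pos_of_neZero (p ^ e)) ξ
  obtain ⟨z', d', hd', h'⟩ := exists_mul_pow_eq (R := R) (Nat.pos_of_neZero (p ^ e)) η
  have hsum : (ξ + η) * algebraMap R K (d * d') ^ p ^ e =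
      algebraMap R K (d' ^ p ^ e * z + d ^ p ^ e * z') := by
    simp only [map_add, map_mul, map_pow, ← h, ← h']
    ring
  have hdK := IsFractionRing.to_map_ne_zero_of_mem_nonZeroDivisors (K := K)
    (mem_nonZeroDivisors_of_ne_zero hd)
  have hdK' := IsFractionRing.to_map_ne_zero_of_mem_nonZeroDivisors (K := K)
    (mem_nonZeroDivisors_of_ne_zero hd')
  rw [hφ.fracExtend_eq (mul_ne_zero hd hd') hsum, hφ.fracExtend_eq hd h, hφ.fracExtend_eq hd' h',
    map_add, hφ, hφ]
  simp only [map_add, map_mul]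
  field_simp

theorem PLinear.fracExtend_pow_mul [NeZero p] (hφ : PLinear R p e φ) (s ξ : K) :
    fracExtend K (p ^ e) φ (s ^ p ^ e * ξ) = s * fracExtend K (p ^ e) φ ξ := by
  obtain ⟨a, b, hb, hs⟩ := exists_mul_pow_eq (R := R) one_pos s
  obtain ⟨z, d, hd, h⟩ := exists_mul_pow_eq (R := R) (Nat.pos_of_neZero (p ^ e)) ξ
  rw [pow_one] at hs
  have hprod : s ^ p ^ e * ξ * algebraMap R K (b * d) ^ p ^ e = algebraMap R K (a ^ p ^ e * z) := by
    simp only [map_mul, map_pow, ← hs, ← h]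
    ring
  have hbK := IsFractionRing.to_map_ne_zero_of_mem_nonZeroDivisors (K := K)
    (mem_nonZeroDivisors_of_ne_zero hb)
  rw [hφ.fracExtend_eq (mul_ne_zero hb hd) hprod, hφ.fracExtend_eq hd h, hφ,
    eq_div_of_mul_eq hbK hs, map_mul, map_mul]
  field_simp

end FractionField

theorem exists_algebraMap_eq_pow_mul_prod {R S : Type*} [CommRing R] [CommRing S] [Algebra R S]
    {f : R} {gs : Finset S} (hf : ∀ g ∈ gs, ∃ c, algebraMap R S f * g = algebraMap R S c)
    {q : ℕ} {β : S → ℕ} (hβ : ∀ g ∈ gs, β g ≤ q) :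
    ∃ r : R, algebraMap R S (f ^ gs.card) ^ q * ∏ g ∈ gs, g ^ β g = algebraMap R S r := by
  suffices h : algebraMap R S (f ^ gs.card) ^ q * ∏ g ∈ gs, g ^ β g ∈ (algebraMap R S).rangeS by
    obtain ⟨r, hr⟩ := h
    exact ⟨r, hr.symm⟩
  rw [map_pow, ← pow_mul, mul_comm gs.card q, pow_mul, ← Finset.prod_const,
    ← Finset.prod_mul_distrib]
  refine prod_mem fun g hg => ?_
  obtain ⟨c, hc⟩ := hf g hg
  refine ⟨f ^ (q - β g) * c ^ β g, ?_⟩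
  rw [map_mul, map_pow, map_pow, ← hc, mul_pow, ← mul_assoc, ← pow_add,
    Nat.sub_add_cancel (hβ g hg)]

theorem mem_subsemiringClosure_of_adjoin_eq_top {k S : Type*} [CommSemiring k] [CommRing S]
    [Algebra k S] {q : ℕ} (hk : ∀ c : k, ∃ d, d ^ q = c) {gs : Finset S}
    (hgs : Algebra.adjoin k (gs : Set S) = ⊤) (s : S) :
    s ∈ (MonoidHom.mrange (powMonoidHom q) ⊔ Submonoid.closure ↑gs).subsemiringClosure := by
  have hs : s ∈ Algebra.adjoin k (gs : Set S) := hgs ▸ Algebra.mem_top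
  induction hs using Algebra.adjoin_induction with
  | mem g hg => exact AddSubmonoid.subset_closure (le_sup_right (α := Submonoid S)
      (Submonoid.subset_closure hg))
  | algebraMap c =>
    obtain ⟨d, rfl⟩ := hk c
    exact AddSubmonoid.subset_closure (le_sup_left (α := Submonoid S) ⟨algebraMap k S d, by simp⟩)
  | add _ _ _ _ hx hy => exact add_mem hx hy
  | mul _ _ _ _ hx hy => exact mul_mem hx hy

theorem exists_plinear_of_forall_mem_range {S K : Type*} [CommRing S] [Field K] [Algebra S K]
    (hS : Function.Injective (algebraMap S K)) {p e : ℕ} {χ : K → K}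
    (hadd : ∀ ξ η, χ (ξ + η) = χ ξ + χ η) (hsmul : ∀ s ξ, χ (s ^ p ^ e * ξ) = s * χ ξ)
    (hχ : ∀ s : S, χ (algebraMap S K s) ∈ Set.range (algebraMap S K)) :
    ∃ ψ : S →+ S, PLinear S p e ψ ∧ ∀ s, algebraMap S K (ψ s) = χ (algebraMap S K s) := by
  choose F hF using hχ
  refine ⟨AddMonoidHom.mk' F fun a b => hS ?_, fun r x => hS ?_, hF⟩
  · simp only [map_add, hF, hadd]
  · simp only [AddMonoidHom.mk'_apply, map_mul, map_pow, hF, hsmul]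

section CommonFractionField

variable {R S : Type*} [CommRing R] [CommRing S] [Algebra R S]

theorem algebraMap_injective_of_isFractionRing (K : Type*) [Field K] [Algebra R K] [Algebra S K]
    [IsScalarTower R S K] [IsFractionRing R K] : Function.Injective (algebraMap R S) :=
  Function.Injective.of_comp (f := algebraMap S K) <| by
    rw [← RingHom.coe_comp, ← IsScalarTower.algebraMap_eq]
    exact IsFractionRing.injective R K

theorem exists_ne_zero_algebraMap_mul_eq [IsDomain R] (K : Type*) [Field K] [Algebra R K]
    [Algebra S K] [IsScalarTower R S K] [IsFractionRing R K] [IsFractionRing S K] (gs : Finset S) :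
    ∃ f : R, f ≠ 0 ∧ ∀ g ∈ gs, ∃ c, algebraMap R S f * g = algebraMap R S c := by
  classical
  obtain ⟨b, hb⟩ :=
    IsLocalization.exist_integer_multiples_of_finset (nonZeroDivisors R) (gs.image (algebraMap S K))
  refine ⟨b, nonZeroDivisors.coe_ne_zero b, fun g hg => ?_⟩
  obtain ⟨c, hc⟩ := hb _ (Finset.mem_image_of_mem _ hg)
  refine ⟨c, IsFractionRing.injective S K ?_⟩
  rw [map_mul, ← IsScalarTower.algebraMap_apply, ← IsScalarTower.algebraMap_apply, hc,
    Algebra.smul_def]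

theorem exists_ne_zero_algebraMap_eq_mul [IsDomain R] [IsDomain S] (K : Type*) [Field K]
    [Algebra R K] [Algebra S K] [IsScalarTower R S K] [IsFractionRing R K] [IsFractionRing S K]
    {x : S} (hx : x ≠ 0) : ∃ c d : R, c ≠ 0 ∧ algebraMap R S c = algebraMap R S d * x := by
  obtain ⟨d, hd0, hd⟩ := exists_ne_zero_algebraMap_mul_eq (R := R) K {x}
  obtain ⟨c, hc⟩ := hd x (Finset.mem_singleton_self x)
  refine ⟨c, d, fun hc0 => ?_, hc.symm⟩
  rw [hc0, map_zero] at hc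
  exact mul_ne_zero ((map_ne_zero_iff _ (algebraMap_injective_of_isFractionRing K)).mpr hd0) hx hc

theorem comap_ne_bot_of_isFractionRing [IsDomain R] [IsDomain S] (K : Type*) [Field K]
    [Algebra R K] [Algebra S K] [IsScalarTower R S K] [IsFractionRing R K] [IsFractionRing S K]
    {J : Ideal S} (hJ : J ≠ ⊥) : J.comap (algebraMap R S) ≠ ⊥ := by
  obtain ⟨s, hs, hs0⟩ := Submodule.exists_mem_ne_zero_of_ne_bot hJ
  obtain ⟨c, d, hc0, hc⟩ := exists_ne_zero_algebraMap_eq_mul (R := R) K hs0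
  exact fun h => hc0 <| Ideal.mem_bot.mp <| h ▸ Ideal.mem_comap.mpr (hc ▸ J.mul_mem_left _ hs)

theorem not_isField_of_isFractionRing [IsDomain R] [IsDomain S] (K : Type*) [Field K]
    [Algebra R K] [Algebra S K] [IsScalarTower R S K] [IsFractionRing R K] [IsFractionRing S K]
    (hS : ¬IsField S) : ¬IsField R := by
  rw [← IsFractionRing.surjective_iff_isField (K := K)] at hS ⊢
  refine fun hR => hS fun ξ => ?_
  obtain ⟨r, rfl⟩ := hR ξ
  exact ⟨algebraMap R S r, (IsScalarTower.algebraMap_apply R S K r).symm⟩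

theorem PLinear.algebraMap_pow_mul_fracExtend_mem_range [IsDomain R] (K : Type*) [Field K]
    [Algebra R K] [Algebra S K] [IsScalarTower R S K] [IsFractionRing R K] {p e : ℕ} [NeZero p]
    {φ : R →+ R} (hφ : PLinear R p e φ) {f : R} (hf0 : f ≠ 0) {gs : Finset S}
    (hf : ∀ g ∈ gs, ∃ c, algebraMap R S f * g = algebraMap R S c) (t : S) (α : S → ℕ) :
    algebraMap R K (f ^ gs.card) *
        fracExtend K (p ^ e) φ (algebraMap S K (t ^ p ^ e * ∏ g ∈ gs, g ^ α g)) ∈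
      Set.range (algebraMap S K) := by
  obtain ⟨r, hr⟩ := exists_algebraMap_eq_pow_mul_prod hf (q := p ^ e)
    (β := fun g => α g % p ^ e) fun g _ => (Nat.mod_lt _ (Nat.pos_of_neZero _)).le
  refine ⟨t * (∏ g ∈ gs, g ^ (α g / p ^ e)) * algebraMap R S (φ r), ?_⟩
  have hr' := congrArg (algebraMap S K) hr
  simp only [map_mul, map_pow, ← IsScalarTower.algebraMap_apply] at hr'
  have hfK : algebraMap R K f ≠ 0 := IsFractionRing.to_map_ne_zero_of_mem_nonZeroDivisors
    (mem_nonZeroDivisors_of_ne_zero hf0)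
  simp only [Finset.prod_pow_eq_pow_div_mul_prod_pow_mod gs α (p ^ e), ← mul_assoc, ← mul_pow,
    map_mul, map_pow, hφ.fracExtend_pow_mul]
  rw [hφ.fracExtend_eq (z := r) (pow_ne_zero gs.card hf0) (by rw [mul_comm, map_pow]; exact hr'),
    ← IsScalarTower.algebraMap_apply, map_pow (algebraMap R K)]
  field_simp

theorem exists_plinear_extension [IsDomain R] (K : Type*) [Field K] [Algebra R K] [Algebra S K]
    [IsScalarTower R S K] [IsFractionRing R K] [IsFractionRing S K] (k : Type*) [Field k]
    [PerfectField k] {p : ℕ} [Fact p.Prime] [CharP k p] [Algebra k S]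
    (hS : Algebra.FiniteType k S) :
    ∃ f : R, f ≠ 0 ∧ ∃ B : ℕ, ∀ e, ∀ φ : R →+ R, PLinear R p e φ →
      ∃ ψ : S →+ S, PLinear S p e ψ ∧ ∀ z, ψ (algebraMap R S z) = algebraMap R S (f ^ B * φ z) := by
  obtain ⟨gs, hgs⟩ := hS.out
  obtain ⟨f, hf0, hf⟩ := exists_ne_zero_algebraMap_mul_eq (R := R) K gs
  refine ⟨f, hf0, gs.card, fun e φ hφ => ?_⟩
  set χ : K → K := fun ξ => algebraMap R K (f ^ gs.card) * fracExtend K (p ^ e) φ ξ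
  have hk : ∀ c : k, ∃ d, d ^ p ^ e = c := fun c => (bijective_iterateFrobenius k p e).2 c
  have hχ : ∀ s : S, χ (algebraMap S K s) ∈ Set.range (algebraMap S K) := by
    intro s
    induction mem_subsemiringClosure_of_adjoin_eq_top hk hgs s using AddSubmonoid.closure_induction
      with
    | mem y hy =>
      obtain ⟨_, ⟨t, rfl⟩, _, hm, rfl⟩ := Submonoid.mem_sup.mp hy
      obtain ⟨α, -, rfl⟩ := Submonoid.mem_closure_finset.mp hm
      exact hφ.algebraMap_pow_mul_fracExtend_mem_range K hf0 hf t α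
    | zero => exact ⟨0, by simp [χ, hφ.fracExtend_zero]⟩
    | add y₁ y₂ _ _ h₁ h₂ =>
      obtain ⟨s₁, hs₁⟩ := h₁
      obtain ⟨s₂, hs₂⟩ := h₂
      exact ⟨s₁ + s₂, by simp only [χ, map_add, hφ.fracExtend_add, mul_add, hs₁, hs₂]⟩
  obtain ⟨ψ, hψ, hψχ⟩ := exists_plinear_of_forall_mem_range (IsFractionRing.injective S K)
    (p := p) (e := e) (χ := χ) (fun ξ η => by simp only [χ, hφ.fracExtend_add, mul_add])
    (fun s ξ => by simp only [χ, hφ.fracExtend_pow_mul]; ring) hχ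
  refine ⟨ψ, hψ, fun z => IsFractionRing.injective S K ?_⟩
  rw [hψχ, ← IsScalarTower.algebraMap_apply, ← IsScalarTower.algebraMap_apply, map_mul]
  exact congrArg _ (hφ.fracExtend_algebraMap z)

end CommonFractionField

theorem IsTestIdeal.algebraMap_mul_mem {R S : Type*} [CommRing R] [IsDomain R] [IsNoetherianRing R]
    [CommRing S] [Algebra R S] {p : ℕ} (hR : ¬IsField R) {f : R} {B : ℕ}
    (hext : ∀ e, ∀ φ : R →+ R, PLinear R p e φ →
      ∃ ψ : S →+ S, PLinear S p e ψ ∧ ∀ z, ψ (algebraMap R S z) = algebraMap R S (f ^ B * φ z))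
    {𝔞 J : Ideal S} {t : ℝ} {T : Ideal R} (hT : IsTestIdeal R p (𝔞.comap (algebraMap R S)) t T)
    (hJ : J.comap (algebraMap R S) ≠ ⊥) (hJc : TestClosed S p 𝔞 t J) {y : R} (hy : y ∈ T) :
    algebraMap R S (f ^ B * y) ∈ J := by
  obtain ⟨w, hw, hw0⟩ := Submodule.exists_mem_ne_zero_of_ne_bot hJ
  suffices h : testSpan p (𝔞.comap (algebraMap R S)) t w ≤
      (J.comap (algebraMap R S)).colon {f ^ B} by
    have := Submodule.mem_colon_singleton.mp (h (hT.le_testSpan hR hw0 hy))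
    rwa [smul_eq_mul, mul_comm, Ideal.mem_comap] at this
  rw [testSpan, Ideal.span_le]
  rintro _ ⟨e, he, φ, hφ, u, hu, rfl⟩
  obtain ⟨ψ, hψ, hψφ⟩ := hext e φ hφ
  rw [SetLike.mem_coe, Submodule.mem_colon_singleton, smul_eq_mul, Ideal.mem_comap, mul_comm,
    ← hψφ, map_mul]
  exact hJc e he ψ hψ _ (Ideal.mul_mem_mul hw (Ideal.le_comap_pow _ _ hu))

end Paper

theorem statement16_general (p : ℕ) [Fact p.Prime]
    (k K R S : Type*) [Field k] [PerfectField k] [CharP k p] [Field K]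
    [CommRing R] [IsDomain R] [CommRing S] [IsDomain S] [Algebra k S]
    [Algebra R S]
    [Algebra R K] [Algebra S K] [IsScalarTower R S K]
    [IsFractionRing R K] [IsFractionRing S K]
    (hSfg : Algebra.FiniteType k S)
    (hRreg : IsRegRing R) (hSreg : IsRegRing S)
    (hinj : Function.Injective (algebraMap R S))
    (Φ : Set ℝ) (hΦ : ∀ s ∈ Φ, ∀ t ∈ Φ, s + t ∈ Φ)
    (a : ℝ → Ideal S) (hgr : ∀ s ∈ Φ, ∀ t ∈ Φ, a s * a t ≤ a (s + t))
    (hne : ∀ s ∈ Φ, a s ≠ ⊥)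
    (h : ∃ x : S, x ≠ 0 ∧ ∀ m ∈ Φ, ∀ T : Ideal S,
      IsAsympTestIdeal S p Φ a m T → ∀ y ∈ T, x * y ∈ a m) :
    ∃ r : R, r ≠ 0 ∧ ∀ m ∈ Φ, ∀ T : Ideal R,
      IsAsympTestIdeal R p Φ (fun s => (a s).comap (algebraMap R S)) m T →
      ∀ y ∈ T, r * y ∈ (a m).comap (algebraMap R S) := by
  obtain ⟨x, hx0, hx⟩ := h
  by_cases hS : IsField S
  · have := Ring.isField_iff_isSimpleOrder_ideal.mp hS
    refine ⟨1, one_ne_zero, fun m hm _ _ _ _ => ?_⟩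
    rw [(eq_bot_or_eq_top (a m)).resolve_left (hne m hm), Ideal.comap_top]
    trivial
  have hR : ¬IsField R := not_isField_of_isFractionRing K hS
  have := hRreg.1
  have := hSreg.1
  obtain ⟨f, hf0, B, hext⟩ := exists_plinear_extension (R := R) K k hSfg
  obtain ⟨c, d, hc0, hc⟩ := exists_ne_zero_algebraMap_eq_mul (R := R) K hx0
  refine ⟨f ^ B * c, mul_ne_zero (pow_ne_zero B hf0) hc0, fun m hm T hT y hy => ?_⟩
  obtain ⟨⟨ℓ, hℓ, -, hTℓ⟩, -⟩ := hT
  obtain ⟨y₀, hy₀, hy₀0⟩ := Submodule.exists_mem_ne_zero_of_ne_bot hTℓ.1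
  obtain ⟨τ, hτ, hTτ⟩ := exists_isTestIdeal_of_forall_subset
    (s := (fun y => algebraMap R S (f ^ B * y)) '' T)
    ⟨_, ⟨y₀, hy₀, rfl⟩, (map_ne_zero_iff _ hinj).mpr (mul_ne_zero (pow_ne_zero B hf0) hy₀0)⟩
    fun J hJ hJc => Set.image_subset_iff.mpr fun y hy =>
      hTℓ.algebraMap_mul_mem hR hext (comap_ne_bot_of_isFractionRing K hJ) hJc hy
  obtain ⟨T', hT', hτT'⟩ := exists_isAsympTestIdeal hS hΦ hgr hne hm hℓ hτ
  have hxy : x * algebraMap R S (f ^ B * y) ∈ a m := hx m hm T' hT' _ (hτT' (hTτ ⟨y, hy, rfl⟩))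
  rw [Ideal.mem_comap, show f ^ B * c * y = c * (f ^ B * y) by ring, map_mul, hc, mul_assoc]
  exact (a m).mul_mem_left _ hxy

/-- **Corollary 4.13(2).** Let `k` be a perfect field of characteristic `p > 0` and `R ⊆ S` an
extension of regular, integral, finitely generated `k`-algebras with the same fraction field
`K`.  Let `𝔞_•` be a graded family of nonzero ideals of `S` and `𝔞̃_•` its family of
contractions to `R`.  If `⋂_{m ∈ Φ} (𝔞_m :_S τ_m(S, 𝔞_•)) ≠ (0)`, then
`⋂_{m ∈ Φ} (𝔞_m ∩ R :_R τ_m(R, 𝔞̃_•)) ≠ (0)`. -/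
theorem statement16 (p : ℕ) [Fact p.Prime]
    (k K R S : Type*) [Field k] [PerfectField k] [CharP k p] [Field K] [Algebra k K]
    [CommRing R] [IsDomain R] [Algebra k R] [CommRing S] [IsDomain S] [Algebra k S]
    [Algebra R S] [IsScalarTower k R S]
    [Algebra R K] [Algebra S K] [IsScalarTower R S K] [IsScalarTower k S K]
    [IsFractionRing R K] [IsFractionRing S K]
    (hRfg : Algebra.FiniteType k R) (hSfg : Algebra.FiniteType k S)
    (hRreg : IsRegRing R) (hSreg : IsRegRing S)
    (hinj : Function.Injective (algebraMap R S))
    (Φ : Set ℝ) (hΦ : ∀ s ∈ Φ, ∀ t ∈ Φ, s + t ∈ Φ)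
    (a : ℝ → Ideal S) (hgr : ∀ s ∈ Φ, ∀ t ∈ Φ, a s * a t ≤ a (s + t))
    (hne : ∀ s ∈ Φ, a s ≠ ⊥)
    (h : ∃ x : S, x ≠ 0 ∧ ∀ m ∈ Φ, ∀ T : Ideal S,
      IsAsympTestIdeal S p Φ a m T → ∀ y ∈ T, x * y ∈ a m) :
    ∃ r : R, r ≠ 0 ∧ ∀ m ∈ Φ, ∀ T : Ideal R,
      IsAsympTestIdeal R p Φ (fun s => (a s).comap (algebraMap R S)) m T →
      ∀ y ∈ T, r * y ∈ (a m).comap (algebraMap R S) :=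
  statement16_general p k K R S hSfg hRreg hSreg hinj Φ hΦ a hgr hne h
end
end

section
/- Let A be a Noetherian domain and 𝔭 a prime ideal of A. Let {𝔞_i}_{i∈I} and {J_i}_{i∈I} be collections of ideals of A, indexed by an arbitrary set I, such that each 𝔞_i is 𝔭-primary. Then ⋂_{i∈I} (𝔞_i A_𝔭 : J_i A_𝔭) = (⋂_{i∈I} (𝔞_i : J_i))·A_𝔭 as ideals of the localization A_𝔭. In particular, ⋂_{i∈I} (𝔞_i A_𝔭 : J_i A_𝔭) ≠ (0) if and only if ⋂_{i∈I} (𝔞_i : J_i) ≠ (0). (Lemma 5.1(2).) -/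
/-!
A `𝔭`-primary ideal is saturated with respect to `A ∖ 𝔭`, and for a saturated ideal `𝔞` the
colon ideal `(𝔞A_𝔭 : JA_𝔭)` contracts to `(𝔞 : J)`. Contraction commutes with intersections
and every ideal of `A_𝔭` is the extension of its contraction, which gives the formula; since
`A → A_𝔭` is injective for a domain, extension neither creates nor kills the zero ideal.
-/

open scoped TensorProduct

noncomputable section

open Paper

theorem Ideal.comap_colon_map_of_comap_map_eq {R S : Type*} [CommRing R] [CommRing S]
    (f : R →+* S) {I : Ideal R} (hI : (I.map f).comap f = I) (J : Ideal R) :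
    ((I.map f).colon (J.map f : Set S)).comap f = I.colon J := by
  refine le_antisymm (fun a ha => Submodule.mem_colon.mpr fun j hj => ?_) fun a ha => ?_
  · rw [← hI, mem_comap, smul_eq_mul, map_mul]
    exact Submodule.mem_colon.mp ha (f j) (mem_map_of_mem f hj)
  · change f a ∈ (I.map f).colon (span (f '' J) : Set S)
    rw [colon_span, Submodule.mem_colon]
    rintro _ ⟨j, hj, rfl⟩
    rw [smul_eq_mul, ← map_mul]
    exact mem_map_of_mem f (by simpa only [smul_eq_mul] using Submodule.mem_colon.mp ha j hj)

theorem IsLocalization.iInf_colon_map_eq_map_iInf_colon {R S : Type*} [CommRing R] [CommRing S]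
    [Algebra R S] (M : Submonoid R) [IsLocalization M S] {ι : Type*} (I J : ι → Ideal R)
    (hI : ∀ i, ((I i).map (algebraMap R S)).comap (algebraMap R S) = I i) :
    (⨅ i, ((I i).map (algebraMap R S)).colon ((J i).map (algebraMap R S) : Set S)) =
      (⨅ i, (I i).colon (J i : Set R)).map (algebraMap R S) := by
  rw [← IsLocalization.map_under M S (⨅ i, _), Ideal.under, Ideal.comap_iInf]
  simp_rw [Ideal.comap_colon_map_of_comap_map_eq _ (hI _)]

theorem statement17_general (A : Type*) [CommRing A] [IsDomain A]
    (𝔭 : Ideal A) [𝔭.IsPrime] {ι : Type*} (𝔞 J : ι → Ideal A)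
    (hprim : ∀ i, (𝔞 i).IsPrimary ∧ (𝔞 i).radical = 𝔭) :
    (⨅ i, ((𝔞 i).map (algebraMap A (Localization.AtPrime 𝔭))).colon
        ((J i).map (algebraMap A (Localization.AtPrime 𝔭)))) =
      (⨅ i, (𝔞 i).colon (J i)).map (algebraMap A (Localization.AtPrime 𝔭)) ∧
    ((⨅ i, ((𝔞 i).map (algebraMap A (Localization.AtPrime 𝔭))).colon
        ((J i).map (algebraMap A (Localization.AtPrime 𝔭)))) ≠ ⊥ ↔
      (⨅ i, (𝔞 i).colon (J i)) ≠ ⊥) := by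
  have key := IsLocalization.iInf_colon_map_eq_map_iInf_colon 𝔭.primeCompl 𝔞 J fun i =>
    IsLocalization.under_map_of_isPrimary_disjoint 𝔭.primeCompl (Localization.AtPrime 𝔭)
      (hprim i).1 (Set.disjoint_compl_left_iff_subset.mpr ((hprim i).2 ▸ Ideal.le_radical))
  refine ⟨key, key ▸ (Ideal.map_eq_bot_iff_of_injective ?_).not⟩
  exact IsLocalization.injective _ 𝔭.primeCompl_le_nonZeroDivisors

/-- **Lemma 5.1(2).** Let `A` be a Noetherian domain, `𝔭` a prime, and `{𝔞ᵢ}`, `{Jᵢ}` families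
of ideals with each `𝔞ᵢ` being `𝔭`-primary.  Then
`⋂ᵢ (𝔞ᵢ A_𝔭 : Jᵢ A_𝔭) = (⋂ᵢ (𝔞ᵢ : Jᵢ)) A_𝔭`; in particular the left side is nonzero iff
the right side is. -/
theorem statement17 (A : Type*) [CommRing A] [IsDomain A] [IsNoetherianRing A]
    (𝔭 : Ideal A) [𝔭.IsPrime] {ι : Type*} (𝔞 J : ι → Ideal A)
    (hprim : ∀ i, (𝔞 i).IsPrimary ∧ (𝔞 i).radical = 𝔭) :
    (⨅ i, ((𝔞 i).map (algebraMap A (Localization.AtPrime 𝔭))).colon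
        ((J i).map (algebraMap A (Localization.AtPrime 𝔭)))) =
      (⨅ i, (𝔞 i).colon (J i)).map (algebraMap A (Localization.AtPrime 𝔭)) ∧
    ((⨅ i, ((𝔞 i).map (algebraMap A (Localization.AtPrime 𝔭))).colon
        ((J i).map (algebraMap A (Localization.AtPrime 𝔭)))) ≠ ⊥ ↔
      (⨅ i, (𝔞 i).colon (J i)) ≠ ⊥) :=
  statement17_general A 𝔭 𝔞 J hprim
end
end

section
/- Let k be a perfect field of characteristic p > 0, let d be a positive integer, and let v_1, …, v_d be positive real numbers that are linearly independent over ℤ. In the polynomial ring R = k[x_1, …, x_d], for each real m ≥ 0 let 𝔞_m be the (monomial) ideal generated by {x_1^{a_1}⋯x_d^{a_d} : a_i ∈ ℤ≥0, a_1 v_1 + ⋯ + a_d v_d ≥ m}; the family 𝔞_• = {𝔞_m}_{m∈ℝ≥0} is a graded family of nonzero ideals of R. Then for every m ∈ ℝ≥0, (x_1⋯x_d)·τ_m(R, 𝔞_•) ⊆ 𝔞_m; that is, x_1⋯x_d lies in the intersection over all m ≥ 0 of the colon ideals (𝔞_m : τ_m(R, 𝔞_•)). (Monomial case established in the proof of Theorem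 B.) -/
open scoped TensorProduct

noncomputable section

open Paper

/-!
The ideal `𝔞_m` is the monomial ideal `weightIdeal v m` of monomials of `v`-weight at least `m`,
and `x₁ ⋯ x_d · x^b ∈ 𝔞_m` exactly when `x^b ∈ J := 𝔞_{m - ∑ vᵢ}`. So it suffices to show that
`τ_m ⊆ J`, and by minimality of the test ideal that `J` satisfies its closure condition.
With `q = p^e`, write a term `c x^b` as `(c^{1/q} x^{⌊b/q⌋})^q · x^{b mod q}`: a `p^{-e}`-linear
map sends it to a multiple of `x^{⌊b/q⌋}`, and `q (⌊bᵢ/q⌋ + 1) ≥ bᵢ + 1` shows that the shifted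
weight `wt + ∑ vᵢ` drops by a factor of at most `q`. Since the terms of `J · 𝔞_{ℓm}^{⌈(q-1)/ℓ⌉}`
have shifted weight at least `m + (q - 1) m = q m`, their images land in `J`.
-/

open MvPolynomial Finsupp

namespace MvPolynomial

variable {σ R : Type*}

section CommSemiring

variable [CommSemiring R] (v : σ → ℝ)

def weightIdeal (m : ℝ) : Ideal (MvPolynomial σ R) :=
  Ideal.span ((fun b => monomial b 1) '' {b | m ≤ weight v b})

variable {v}

theorem monomial_one_mem_weightIdeal {m : ℝ} {b : σ →₀ ℕ} (h : m ≤ weight v b) :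
    (monomial b 1 : MvPolynomial σ R) ∈ weightIdeal v m :=
  Ideal.subset_span ⟨b, h, rfl⟩

theorem mem_weightIdeal_iff (hv : 0 ≤ v) {m : ℝ} {z : MvPolynomial σ R} :
    z ∈ weightIdeal v m ↔ ∀ b ∈ z.support, m ≤ weight v b := by
  refine mem_ideal_span_monomial_image.trans (forall₂_congr fun b _ => ⟨?_, fun h => ⟨b, h, le_rfl⟩⟩)
  rintro ⟨c, hc, hcb⟩
  obtain ⟨d, rfl⟩ := exists_add_of_le hcb
  have hd : 0 ≤ weight v d := by
    rw [weight_apply]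
    exact Finsupp.sum_nonneg fun i _ => nsmul_nonneg (hv i) _
  rw [map_add]
  exact hc.out.trans (le_add_of_nonneg_right hd)

theorem weightIdeal_mul_le (s t : ℝ) :
    weightIdeal v s * weightIdeal v t ≤ (weightIdeal v (s + t) : Ideal (MvPolynomial σ R)) := by
  rw [weightIdeal, weightIdeal, Ideal.span_mul_span, Ideal.span_le]
  rintro _ ⟨_, ⟨b, hb, rfl⟩, _, ⟨c, hc, rfl⟩, rfl⟩
  show monomial b 1 * monomial c 1 ∈ _
  rw [monomial_mul, one_mul]
  exact monomial_one_mem_weightIdeal (by rw [map_add]; exact add_le_add hb hc)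

theorem weightIdeal_pow_le (s : ℝ) (n : ℕ) :
    weightIdeal v s ^ n ≤ (weightIdeal v (n * s) : Ideal (MvPolynomial σ R)) := by
  induction n with
  | zero =>
    rw [pow_zero, Ideal.one_eq_top, top_le_iff, Ideal.eq_top_iff_one, one_def]
    exact monomial_one_mem_weightIdeal (by simp)
  | succ n ih =>
    rw [pow_succ, Nat.cast_succ, add_one_mul]
    exact (Ideal.mul_mono_left ih).trans (weightIdeal_mul_le _ _)

theorem weightIdeal_ne_bot [Nontrivial R] (i : σ) (hi : 0 < v i) (m : ℝ) :
    (weightIdeal v m : Ideal (MvPolynomial σ R)) ≠ ⊥ := by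
  obtain ⟨n, hn⟩ := Archimedean.arch m hi
  refine (Submodule.ne_bot_iff _).mpr ⟨_, monomial_one_mem_weightIdeal (b := single i n) ?_, ?_⟩
  · rwa [weight_single]
  · exact monomial_eq_zero.not.mpr one_ne_zero

theorem prod_X_pow_eq_monomial_equivFunOnFinite [Fintype σ] (e : σ → ℕ) :
    (∏ i, X i ^ e i : MvPolynomial σ R) = monomial (equivFunOnFinite.symm e) 1 := by
  classical
  rw [← prod_X_pow_eq_monomial]
  refine (Finset.prod_subset (Finset.subset_univ _) fun i _ hi => ?_).symm
  have : e i = 0 := Finsupp.notMem_support_iff.mp hi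
  rw [this, pow_zero]

theorem weight_equivFunOnFinite_symm [Fintype σ] (e : σ → ℕ) :
    weight v (equivFunOnFinite.symm e) = ∑ i, (e i : ℝ) * v i := by
  simp [weight_eq_sum, nsmul_eq_mul]

theorem span_prod_X_pow_eq_weightIdeal [Fintype σ] (m : ℝ) :
    Ideal.span {z : MvPolynomial σ R | ∃ e : σ → ℕ, m ≤ ∑ i, (e i : ℝ) * v i ∧ z = ∏ i, X i ^ e i} =
      weightIdeal v m := by
  congr 1
  ext z
  simp only [Set.mem_ofPred_eq, Set.mem_image, prod_X_pow_eq_monomial_equivFunOnFinite,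
    ← weight_equivFunOnFinite_symm]
  exact ⟨fun ⟨e, he, hz⟩ => ⟨_, he, hz.symm⟩,
    fun ⟨b, hb, hz⟩ => ⟨b, by simpa using hb, by simpa using hz.symm⟩⟩

theorem prod_X_mul_mem_weightIdeal [Fintype σ] {m : ℝ} {y : MvPolynomial σ R}
    (hy : y ∈ weightIdeal v (m - ∑ i, v i)) : (∏ i, X i) * y ∈ weightIdeal v m := by
  have hX : (∏ i, X i : MvPolynomial σ R) ∈ weightIdeal v (∑ i, v i) := by
    simpa [← prod_X_pow_eq_monomial_equivFunOnFinite, weight_equivFunOnFinite_symm] using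
      monomial_one_mem_weightIdeal (R := R) (v := v) (b := equivFunOnFinite.symm 1)
        (weight_equivFunOnFinite_symm 1).ge
  simpa using weightIdeal_mul_le _ _ (Ideal.mul_mem_mul hX hy)

theorem monomial_eq_pow_mul_monomial (q : ℕ) (b : σ →₀ ℕ) {c w : R} (hw : w ^ q = c) :
    monomial b c = (C w * monomial (b.mapRange (· / q) (Nat.zero_div q)) 1) ^ q *
      monomial (b.mapRange (· % q) (Nat.zero_mod q)) 1 := by
  have hb : q • b.mapRange (· / q) (Nat.zero_div q) + b.mapRange (· % q) (Nat.zero_mod q) = b := by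
    ext i
    exact Nat.div_add_mod (b i) q
  rw [mul_pow, ← C_pow, hw, monomial_pow, one_pow, C_mul_monomial, monomial_mul, hb, mul_one, mul_one]

theorem weight_add_sum_le_mul_weight_div [Fintype σ] (hv : 0 ≤ v) {q : ℕ} (hq : 0 < q)
    (b : σ →₀ ℕ) :
    weight v b + ∑ i, v i ≤ q * (weight v (b.mapRange (· / q) (Nat.zero_div q)) + ∑ i, v i) := by
  simp only [weight_eq_sum, mapRange_apply, nsmul_eq_mul, ← Finset.sum_add_distrib, Finset.mul_sum]
  refine Finset.sum_le_sum fun i _ => ?_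
  have h : ((b i : ℕ) : ℝ) + 1 ≤ q * ((b i / q : ℕ) + 1) := by
    exact_mod_cast Nat.lt_mul_div_succ (b i) hq
  linarith [mul_le_mul_of_nonneg_right h (hv i)]

end CommSemiring

section Frobenius

variable [CommRing R] (p : ℕ) [ExpChar R p] [PerfectRing R p] {v : σ → ℝ}

theorem map_mem_weightIdeal_of_pLinear [Fintype σ] (hv : 0 ≤ v) {e : ℕ}
    {φ : MvPolynomial σ R →+ MvPolynomial σ R} (hφ : PLinear (MvPolynomial σ R) p e φ) {t : ℝ}
    {z : MvPolynomial σ R}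
    (hz : ∀ b ∈ z.support, (p ^ e : ℝ) * (t + ∑ i, v i) ≤ weight v b + ∑ i, v i) :
    φ z ∈ weightIdeal v t := by
  rw [z.as_sum, map_sum]
  refine Ideal.sum_mem _ fun b hb => ?_
  obtain ⟨w, hw⟩ := (bijective_iterateFrobenius R p e).2 (z.coeff b)
  rw [iterateFrobenius_def] at hw
  rw [monomial_eq_pow_mul_monomial _ b hw, hφ]
  refine Ideal.mul_mem_right _ _ (Ideal.mul_mem_left _ _ (monomial_one_mem_weightIdeal ?_))
  have hq : 0 < p ^ e := pow_pos (expChar_pos R p) e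
  have h := (hz b hb).trans (weight_add_sum_le_mul_weight_div hv hq b)
  push_cast at h
  linarith [le_of_mul_le_mul_left h (by exact_mod_cast hq)]

theorem testClosed_weightIdeal [Fintype σ] (hv : 0 ≤ v) {m ℓ : ℝ} (hm : 0 ≤ m) (hℓ : 0 < ℓ) :
    TestClosed (MvPolynomial σ R) p (weightIdeal v (ℓ * m)) (1 / ℓ)
      (weightIdeal v (m - ∑ i, v i)) := by
  intro e _ φ hφ z hz
  set N := ⌈1 / ℓ * ((p : ℝ) ^ e - 1)⌉₊
  have hN : ((p : ℝ) ^ e - 1) * m ≤ N * (ℓ * m) := by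
    have h : (p : ℝ) ^ e - 1 ≤ N * ℓ := by
      rw [← div_le_iff₀ hℓ, ← one_div_mul_eq_div]
      exact Nat.le_ceil _
    rw [← mul_assoc]
    exact mul_le_mul_of_nonneg_right h hm
  have hz' : z ∈ weightIdeal v (m - ∑ i, v i + N * (ℓ * m)) :=
    weightIdeal_mul_le _ _ (Ideal.mul_mono_right (weightIdeal_pow_le _ N) hz)
  refine map_mem_weightIdeal_of_pLinear p hv hφ fun b hb => ?_
  rw [sub_add_cancel]
  linarith [(mem_weightIdeal_iff hv).1 hz' b hb]

theorem le_weightIdeal_of_isAsympTestIdeal [Fintype σ] [Nonempty σ] [Nontrivial R]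
    (hv : ∀ i, 0 < v i) {Φ : Set ℝ} {m : ℝ} (hm : 0 ≤ m) {T : Ideal (MvPolynomial σ R)}
    (hT : IsAsympTestIdeal (MvPolynomial σ R) p Φ (weightIdeal v) m T) :
    T ≤ weightIdeal v (m - ∑ i, v i) := by
  obtain ⟨⟨ℓ, hℓ, -, -, -, hmin⟩, -⟩ := hT
  exact hmin _ (weightIdeal_ne_bot (Classical.arbitrary σ) (hv _) _)
    (testClosed_weightIdeal p (fun i => (hv i).le) hm (Nat.cast_pos.mpr hℓ))

end Frobenius

end MvPolynomial

theorem statement19_general (p : ℕ) [Fact p.Prime]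
    (k : Type*) [Field k] [PerfectField k] [CharP k p]
    (d : ℕ) (hd : 0 < d) (v : Fin d → ℝ) (hv : ∀ i, 0 < v i)
    (a : ℝ → Ideal (MvPolynomial (Fin d) k))
    (ha : ∀ m : ℝ, a m = Ideal.span {z : MvPolynomial (Fin d) k |
      ∃ e : Fin d → ℕ, m ≤ (∑ i, (e i : ℝ) * v i) ∧ z = ∏ i, MvPolynomial.X i ^ e i}) :
    (∀ s t : ℝ, 0 ≤ s → 0 ≤ t → a s * a t ≤ a (s + t)) ∧
    (∀ s : ℝ, 0 ≤ s → a s ≠ ⊥) ∧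
    ∀ m : ℝ, 0 ≤ m → ∀ T : Ideal (MvPolynomial (Fin d) k),
      IsAsympTestIdeal (MvPolynomial (Fin d) k) p {x : ℝ | 0 ≤ x} a m T →
      ∀ y ∈ T, (∏ i, MvPolynomial.X i) * y ∈ a m := by
  obtain rfl : a = weightIdeal v := by
    funext m
    rw [ha m, span_prod_X_pow_eq_weightIdeal]
  have : Nonempty (Fin d) := Fin.pos_iff_nonempty.mp hd
  refine ⟨fun s t _ _ => weightIdeal_mul_le s t, fun s _ => weightIdeal_ne_bot ⟨0, hd⟩ (hv _) s, ?_⟩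
  intro m hm T hT y hy
  exact prod_X_mul_mem_weightIdeal (le_weightIdeal_of_isAsympTestIdeal p hv hm hT hy)

/-- **Monomial case in the proof of Theorem B.** Let `k` be a perfect field of characteristic
`p > 0`, `v₁, …, v_d` positive reals linearly independent over `ℤ`, and in
`R = k[x₁, …, x_d]` let `𝔞_m` be the ideal generated by the monomials `x^a` with
`∑ aᵢ vᵢ ≥ m`.  Then `𝔞_•` is a graded family of nonzero ideals and
`(x₁ ⋯ x_d) · τ_m(R, 𝔞_•) ⊆ 𝔞_m` for every `m ≥ 0`. -/
theorem statement19 (p : ℕ) [Fact p.Prime]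
    (k : Type*) [Field k] [PerfectField k] [CharP k p]
    (d : ℕ) (hd : 0 < d) (v : Fin d → ℝ) (hv : ∀ i, 0 < v i)
    (hind : ∀ c : Fin d → ℤ, (∑ i, (c i : ℝ) * v i) = 0 → c = 0)
    (a : ℝ → Ideal (MvPolynomial (Fin d) k))
    (ha : ∀ m : ℝ, a m = Ideal.span {z : MvPolynomial (Fin d) k |
      ∃ e : Fin d → ℕ, m ≤ (∑ i, (e i : ℝ) * v i) ∧ z = ∏ i, MvPolynomial.X i ^ e i}) :
    (∀ s t : ℝ, 0 ≤ s → 0 ≤ t → a s * a t ≤ a (s + t)) ∧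
    (∀ s : ℝ, 0 ≤ s → a s ≠ ⊥) ∧
    ∀ m : ℝ, 0 ≤ m → ∀ T : Ideal (MvPolynomial (Fin d) k),
      IsAsympTestIdeal (MvPolynomial (Fin d) k) p {x : ℝ | 0 ≤ x} a m T →
      ∀ y ∈ T, (∏ i, MvPolynomial.X i) * y ∈ a m :=
  statement19_general p k d hd v hv a ha
end
end
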